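/- arXiv:2204.09972 — 12 statements merged into one kernel-verified Lean document; each statement's English description precedes it below -/
import Mathlib

section
/- Let E be a finite nonempty type, let P be an irreducible stochastic matrix on E, and let π be an invariant probability vector of P. Then the matrix I − P + e π^T is invertible. -/
/-!
If `(I - P + e πᵀ) v = 0`, pairing with the invariant vector `π` gives `π ⬝ᵥ v = 0`, hence
`P v = v`. A `P`-harmonic vector is constant when `P` is irreducible: its value at a maximum is
an average of values that are no larger, so every state reachable from the maximum is also a
maximum. A constant vector with `π ⬝ᵥ v = 0` vanishes.
-/

open Matrix

namespace Matrix

variable {E : Type*} [Fintype E] [DecidableEq E] {P : Matrix E E ℝ}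

theorem apply_eq_of_mulVec_eq_self_of_forall_le (hP : P ∈ rowStochastic ℝ E) {v : E → ℝ}
    (hv : P *ᵥ v = v) {i j : E} (hmax : ∀ k, v k ≤ v i) (hij : 0 < P i j) : v j = v i := by
  have hsum : ∑ k, P i k * (v i - v k) = 0 := by
    simp only [mul_sub, Finset.sum_sub_distrib, ← Finset.sum_mul,
      sum_row_of_mem_rowStochastic hP, one_mul]
    simpa [mulVec, dotProduct, sub_eq_zero] using (congrFun hv i).symm
  have hterm := (Finset.sum_eq_zero_iff_of_nonneg fun k _ =>
    mul_nonneg (nonneg_of_mem_rowStochastic hP) (sub_nonneg.2 (hmax k))).1 hsum j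
    (Finset.mem_univ j)
  linarith [(mul_eq_zero.1 hterm).resolve_left hij.ne']

theorem pow_mulVec_eq_self {v : E → ℝ} (hv : P *ᵥ v = v) (n : ℕ) : P ^ n *ᵥ v = v := by
  induction n with
  | zero => simp
  | succ n ih => rw [pow_succ, ← mulVec_mulVec, hv, ih]

theorem apply_eq_apply_of_mulVec_eq_self (hP : P ∈ rowStochastic ℝ E)
    (hreach : ∀ i j, ∃ n, 0 < (P ^ n) i j) {v : E → ℝ} (hv : P *ᵥ v = v) (i j : E) :
    v i = v j := by
  have : Nonempty E := ⟨i⟩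
  obtain ⟨m, hm⟩ := Finite.exists_max v
  have hconst (k : E) : v k = v m := by
    obtain ⟨n, hn⟩ := hreach m k
    exact apply_eq_of_mulVec_eq_self_of_forall_le (pow_mem hP n) (pow_mulVec_eq_self hv n) hm hn
  rw [hconst i, hconst j]

theorem isUnit_one_sub_add_vecMulVec (hP : P ∈ rowStochastic ℝ E)
    (hreach : ∀ i j, ∃ n, 0 < (P ^ n) i j) {π : E → ℝ} (hπ1 : ∑ i, π i = 1)
    (hπP : π ᵥ* P = π) : IsUnit (1 - P + vecMulVec 1 π) := by
  rw [← mulVec_injective_iff_isUnit, ← coe_mulVecLin, injective_iff_map_eq_zero]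
  intro v hv
  rw [mulVecLin_apply, add_mulVec, sub_mulVec, one_mulVec, vecMulVec_mulVec] at hv
  have hπv : π ⬝ᵥ v = 0 := by
    simpa [dotProduct_mulVec, hπP, dotProduct_one, hπ1] using congrArg (π ⬝ᵥ ·) hv
  have hfix : P *ᵥ v = v := by
    rw [hπv] at hv
    simpa [sub_eq_zero, eq_comm] using hv
  have hconst := apply_eq_apply_of_mulVec_eq_self hP hreach hfix
  ext i
  calc v i = ∑ j, π j * v i := by rw [← Finset.sum_mul, hπ1, one_mul]
    _ = π ⬝ᵥ v := Finset.sum_congr rfl fun j _ => by rw [hconst j i]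
    _ = 0 := hπv

end Matrix

theorem stmt0_general {E : Type*} [Fintype E] [DecidableEq E]
    (P : Matrix E E ℝ)
    (hP0 : ∀ i j, 0 ≤ P i j) (hP1 : ∀ i, ∑ j, P i j = 1)
    (hirr : ∀ i j, ∃ n, 1 ≤ n ∧ 0 < (P ^ n) i j)
    (π : E → ℝ) (hπ1 : ∑ i, π i = 1)
    (hπP : π ᵥ* P = π) :
    IsUnit (1 - P + Matrix.vecMulVec (fun _ => (1 : ℝ)) π) :=
  isUnit_one_sub_add_vecMulVec (mem_rowStochastic_iff_sum.2 ⟨hP0, hP1⟩)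
    (fun i j => (hirr i j).imp fun _ => And.right) hπ1 hπP

theorem stmt0 {E : Type*} [Fintype E] [Nonempty E] [DecidableEq E]
    (P : Matrix E E ℝ)
    (hP0 : ∀ i j, 0 ≤ P i j) (hP1 : ∀ i, ∑ j, P i j = 1)
    (hirr : ∀ i j, ∃ n, 1 ≤ n ∧ 0 < (P ^ n) i j)
    (π : E → ℝ) (hπ0 : ∀ i, 0 ≤ π i) (hπ1 : ∑ i, π i = 1)
    (hπP : π ᵥ* P = π) :
    IsUnit (1 - P + Matrix.vecMulVec (fun _ => (1 : ℝ)) π) :=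
  stmt0_general P hP0 hP1 hirr π hπ1 hπP
end

section
/- Let E be a finite nonempty type, let P be an irreducible stochastic matrix on E, and let π be an invariant probability vector of P. Then the matrix G := (I − P + e π^T)^{-1} − e π^T satisfies the group-inverse identities (I − P) G (I − P) = I − P, G (I − P) G = G, and G (I − P) = (I − P) G; moreover (I − P) G = I − e π^T, so G is a solution of Poisson's equation in matrix form. -/
/-!
Write `Q = e πᵀ`. Invariance of `π` and the row sums of `P` give `Q² = Q` and
`(I - P) Q = Q (I - P) = 0`, so `A = (I - P) + Q` splits `I - P` off along the idempotent `Q`.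
`A` is invertible: if `A x = 0` then `πᵀ x = πᵀ A x = 0`, hence `Q x = 0` and `P x = x`; by the
maximum principle for the irreducible stochastic matrix `P` the vector `x` is constant, and
`πᵀ x = 0` forces `x = 0`. The rest is ring algebra: `A⁻¹ Q = Q = Q A⁻¹`, so
`(I - P)(A⁻¹ - Q) = I - Q = (A⁻¹ - Q)(I - P)`, from which the group-inverse identities follow.
-/

open Matrix

section GroupInverse

variable {R : Type*} [Ring R] {l q b : R}

theorem IsIdempotentElem.groupInverse_identities (hq : IsIdempotentElem q) (hlq : l * q = 0)
    (hql : q * l = 0) (hab : (l + q) * b = 1) (hba : b * (l + q) = 1) :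
    l * (b - q) * l = l ∧ (b - q) * l * (b - q) = b - q ∧
      (b - q) * l = l * (b - q) ∧ l * (b - q) = 1 - q := by
  have hbq : b * q = q := by
    calc b * q = b * ((l + q) * q) := by rw [add_mul, hlq, hq.eq, zero_add]
      _ = q := by rw [← mul_assoc, hba, one_mul]
  have hqb : q * b = q := by
    calc q * b = (q * (l + q)) * b := by rw [mul_add, hql, hq.eq, zero_add]
      _ = q := by rw [mul_assoc, hab, mul_one]
  have hlg : l * (b - q) = 1 - q := by
    rw [mul_sub, hlq, sub_zero, ← add_sub_cancel_right l q, sub_mul, hab, hqb]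
  have hgl : (b - q) * l = 1 - q := by
    rw [sub_mul, hql, sub_zero, ← add_sub_cancel_right l q, mul_sub, hba, hbq]
  refine ⟨?_, ?_, hgl.trans hlg.symm, hlg⟩
  · rw [hlg, sub_mul, one_mul, hql, sub_zero]
  · rw [hgl, sub_mul, one_mul, mul_sub, hqb, hq.eq, sub_self, sub_zero]

end GroupInverse

namespace Matrix

variable {n R : Type*} [Fintype n] [DecidableEq n]

theorem pow_mulVec_eq_self_s1 [Semiring R] {M : Matrix n n R} {x : n → R} (hx : M *ᵥ x = x)
    (k : ℕ) : (M ^ k) *ᵥ x = x := by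
  induction k with
  | zero => exact one_mulVec x
  | succ k ih => rw [pow_succ, ← mulVec_mulVec, hx, ih]

section Order

variable [Ring R] [LinearOrder R] [IsStrictOrderedRing R] {M : Matrix n n R} {x : n → R}

theorem apply_eq_of_mulVec_eq_self_of_forall_le_s1 (hM : M ∈ rowStochastic R n) (hx : M *ᵥ x = x)
    {i j : n} (hi : ∀ k, x k ≤ x i) (hij : 0 < M i j) : x j = x i := by
  have hsum : ∑ k, M i k * (x i - x k) = 0 := by
    have hxi : ∑ k, M i k * x k = x i := congrFun hx i
    simp only [mul_sub, Finset.sum_sub_distrib, ← Finset.sum_mul, sum_row_of_mem_rowStochastic hM,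
      one_mul, hxi, sub_self]
  have hterm := (Finset.sum_eq_zero_iff_of_nonneg fun k _ =>
    mul_nonneg (nonneg_of_mem_rowStochastic hM) (sub_nonneg.2 (hi k))).1 hsum j (Finset.mem_univ j)
  exact (sub_eq_zero.1 ((mul_eq_zero.1 hterm).resolve_left hij.ne')).symm

theorem IsIrreducible.eq_of_mulVec_eq_self (hirr : M.IsIrreducible) (hM : M ∈ rowStochastic R n)
    (hx : M *ᵥ x = x) (j k : n) : x j = x k := by
  obtain ⟨i, -, hi⟩ := Finset.exists_max_image Finset.univ x ⟨j, Finset.mem_univ j⟩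
  have hmax : ∀ l, x l = x i := fun l => by
    obtain ⟨m, -, hm⟩ := (isIrreducible_iff_exists_pow_pos hirr.nonneg).1 hirr i l
    exact apply_eq_of_mulVec_eq_self_of_forall_le_s1 (pow_mem hM m) (pow_mulVec_eq_self_s1 hx m)
      (fun k => hi k (Finset.mem_univ k)) hm
  rw [hmax j, hmax k]

end Order

theorem det_one_sub_add_vecMulVec_ne_zero [Field R] [LinearOrder R] [IsStrictOrderedRing R]
    {P : Matrix n n R} (hirr : P.IsIrreducible) (hP : P ∈ rowStochastic R n) {π : n → R}
    (hπ : π ⬝ᵥ 1 = 1) (hπP : π ᵥ* P = π) : (1 - P + vecMulVec 1 π).det ≠ 0 := by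
  intro hdet
  obtain ⟨x, hx0, hx⟩ := exists_mulVec_eq_zero_iff.2 hdet
  have hπA : π ᵥ* (1 - P + vecMulVec 1 π) = π := by
    rw [vecMul_add, vecMul_sub, vecMul_one, hπP, sub_self, zero_add, vecMul_vecMulVec, hπ, one_smul]
  have hπx : π ⬝ᵥ x = 0 := by rw [← hπA, ← dotProduct_mulVec, hx, dotProduct_zero]
  have hPx : P *ᵥ x = x := by
    rw [add_mulVec, vecMulVec_mulVec, hπx, sub_mulVec, one_mulVec] at hx
    simpa [sub_eq_zero, eq_comm] using hx
  refine hx0 (funext fun j => ?_)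
  have hconst : x = x j • 1 := funext fun i => by simp [hirr.eq_of_mulVec_eq_self hP hPx i j]
  rwa [hconst, dotProduct_smul, hπ, smul_eq_mul, mul_one] at hπx

end Matrix

theorem stmt1_general {E : Type*} [Fintype E] [DecidableEq E]
    (P : Matrix E E ℝ)
    (hP0 : ∀ i j, 0 ≤ P i j) (hP1 : ∀ i, ∑ j, P i j = 1)
    (hirr : ∀ i j, ∃ n, 1 ≤ n ∧ 0 < (P ^ n) i j)
    (π : E → ℝ) (hπ1 : ∑ i, π i = 1)
    (hπP : π ᵥ* P = π)
    (G : Matrix E E ℝ)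
    (hG : G = (1 - P + Matrix.vecMulVec (fun _ => (1 : ℝ)) π)⁻¹
            - Matrix.vecMulVec (fun _ => (1 : ℝ)) π) :
    (1 - P) * G * (1 - P) = 1 - P ∧
    G * (1 - P) * G = G ∧
    G * (1 - P) = (1 - P) * G ∧
    (1 - P) * G = 1 - Matrix.vecMulVec (fun _ => (1 : ℝ)) π := by
  rw [show vecMulVec (fun _ => (1 : ℝ)) π = vecMulVec 1 π from rfl] at hG ⊢
  have hPs : P ∈ rowStochastic ℝ E := mem_rowStochastic_iff_sum.2 ⟨hP0, hP1⟩
  have hPirr : P.IsIrreducible := (isIrreducible_iff_exists_pow_pos hP0).2 hirr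
  have hπ : π ⬝ᵥ 1 = 1 := (dotProduct_one π).trans hπ1
  have hA : IsUnit (1 - P + vecMulVec 1 π).det :=
    (det_one_sub_add_vecMulVec_ne_zero hPirr hPs hπ hπP).isUnit
  have hQ : IsIdempotentElem (vecMulVec 1 π : Matrix E E ℝ) := by
    rw [IsIdempotentElem, vecMulVec_mul_vecMulVec, hπ, one_smul]
  have hPQ : (1 - P) * vecMulVec 1 π = 0 := by
    rw [mul_vecMulVec, sub_mulVec, one_mulVec, one_vecMul_of_mem_rowStochastic hPs, sub_self,
      zero_vecMulVec]
  have hQP : (vecMulVec 1 π : Matrix E E ℝ) * (1 - P) = 0 := by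
    rw [vecMulVec_mul, vecMul_sub, vecMul_one, hπP, sub_self, vecMulVec_zero]
  rw [hG]
  exact hQ.groupInverse_identities hPQ hQP (mul_nonsing_inv _ hA) (nonsing_inv_mul _ hA)

theorem stmt1 {E : Type*} [Fintype E] [Nonempty E] [DecidableEq E]
    (P : Matrix E E ℝ)
    (hP0 : ∀ i j, 0 ≤ P i j) (hP1 : ∀ i, ∑ j, P i j = 1)
    (hirr : ∀ i j, ∃ n, 1 ≤ n ∧ 0 < (P ^ n) i j)
    (π : E → ℝ) (hπ0 : ∀ i, 0 ≤ π i) (hπ1 : ∑ i, π i = 1)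
    (hπP : π ᵥ* P = π)
    (G : Matrix E E ℝ)
    (hG : G = (1 - P + Matrix.vecMulVec (fun _ => (1 : ℝ)) π)⁻¹
            - Matrix.vecMulVec (fun _ => (1 : ℝ)) π) :
    (1 - P) * G * (1 - P) = 1 - P ∧
    G * (1 - P) * G = G ∧
    G * (1 - P) = (1 - P) * G ∧
    (1 - P) * G = 1 - Matrix.vecMulVec (fun _ => (1 : ℝ)) π :=
  stmt1_general P hP0 hP1 hirr π hπ1 hπP G hG
end

section
/- Let E be a countable type, let P be an irreducible transition matrix on E, and let π be an invariant probability vector of P. If h : E → ℝ is harmonic, i.e. for each i ∈ E the family (P(i,k)·h(k))_{k∈E} has sum h(i), and the family (π(i)·|h(i)|)_{i∈E} is summable, then h is constant: h(i) = h(j) for all i, j ∈ E. -/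
/-!
Subtracting a constant, it suffices to show that a harmonic function `f` with `f j = 0` vanishes
identically. The positive part `f⁺` is subharmonic, and summing `P f⁺ - f⁺ ≥ 0` against the
invariant vector gives `0` (exchange the order of summation in `∑ π P f⁺`), so `f⁺` is harmonic
wherever `π > 0`, which by irreducibility is everywhere. A nonnegative harmonic function vanishing
at a state vanishes at every successor; applied to `f⁺` and `(-f)⁺` along a path from `j` this
gives `f = 0`.
-/

theorem summable_mul_abs_sub_const {ι : Type*} {π h : ι → ℝ} (hπ0 : ∀ i, 0 ≤ π i)
    (hπ : Summable π) (hh : Summable fun i => π i * |h i|) (c : ℝ) :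
    Summable fun i => π i * |h i - c| :=
  (hh.add (hπ.mul_right |c|)).of_nonneg_of_le (fun i => mul_nonneg (hπ0 i) (abs_nonneg _))
    fun i => (mul_le_mul_of_nonneg_left (abs_sub _ _) (hπ0 i)).trans_eq (mul_add _ _ _)

namespace TransitionMatrix

variable {E : Type*} {P : E → E → ℝ} {π : E → ℝ}

def IsHarmonic (P : E → E → ℝ) (u : E → ℝ) : Prop :=
  ∀ i, HasSum (fun k => P i k * u k) (u i)

def IsIrreducible (P : E → E → ℝ) : Prop :=
  ∀ i j, ∃ n, 1 ≤ n ∧ ∃ x : ℕ → E, x 0 = i ∧ x n = j ∧ ∀ k < n, 0 < P (x k) (x (k + 1))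

theorem IsIrreducible.forall_of_forall_transition (hP : IsIrreducible P) {Q : E → Prop}
    (hQ : ∀ a b, Q a → 0 < P a b → Q b) {i : E} (hi : Q i) (j : E) : Q j := by
  obtain ⟨n, -, x, rfl, rfl, hx⟩ := hP i j
  induction n with
  | zero => exact hi
  | succ n ih => exact hQ _ _ (ih fun k hk => hx k (by omega)) (hx n n.lt_succ_self)

theorem pos_of_invariant_of_transition_pos (hP0 : ∀ i j, 0 ≤ P i j) (hπ0 : ∀ i, 0 ≤ π i)
    (hπP : ∀ j, HasSum (fun i => π i * P i j) (π j)) {a b : E} (ha : 0 < π a)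
    (hab : 0 < P a b) : 0 < π b :=
  (mul_pos ha hab).trans_le <| le_hasSum (hπP b) a fun c _ => mul_nonneg (hπ0 c) (hP0 c b)

theorem IsIrreducible.pos_of_invariant (hP : IsIrreducible P) (hP0 : ∀ i j, 0 ≤ P i j)
    (hπ0 : ∀ i, 0 ≤ π i) (hπ : π ≠ 0) (hπP : ∀ j, HasSum (fun i => π i * P i j) (π j))
    (j : E) : 0 < π j := by
  obtain ⟨i, hi⟩ : ∃ i, 0 < π i := by
    by_contra! h
    exact hπ <| funext fun i => le_antisymm (h i) (hπ0 i)
  exact hP.forall_of_forall_transition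
    (fun a b ha hab => pos_of_invariant_of_transition_pos hP0 hπ0 hπP ha hab) hi j

theorem hasSum_invariant_mul_tsum (hP0 : ∀ i j, 0 ≤ P i j) (hπ0 : ∀ i, 0 ≤ π i)
    (hπP : ∀ j, HasSum (fun i => π i * P i j) (π j)) {u : E → ℝ} (hu0 : 0 ≤ u)
    (hπu : Summable fun k => π k * u k) :
    HasSum (fun a => π a * ∑' k, P a k * u k) (∑' k, π k * u k) := by
  set F : E × E → ℝ := fun p => π p.2 * P p.2 p.1 * u p.1
  have hcol : ∀ k, HasSum (fun a => F (k, a)) (π k * u k) := fun k => (hπP k).mul_right (u k)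
  have hF : Summable F :=
    (summable_prod_of_nonneg fun p => mul_nonneg (mul_nonneg (hπ0 _) (hP0 _ _)) (hu0 _)).2
      ⟨fun k => (hcol k).summable, hπu.congr fun k => (hcol k).tsum_eq.symm⟩
  have hFsum : HasSum F (∑' k, π k * u k) := by
    convert hF.hasSum using 1
    rw [hF.tsum_prod' fun k => (hcol k).summable]
    exact tsum_congr fun k => (hcol k).tsum_eq.symm
  have hFswap : HasSum (F ∘ Prod.swap) (∑' k, π k * u k) :=
    (Equiv.prodComm E E).hasSum_iff.2 hFsum
  refine hFswap.prod_fiberwise fun a => ?_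
  have hrow : Summable fun k => π a * P a k * u k := hFswap.summable.prod_factor a
  show HasSum (fun k => π a * P a k * u k) (π a * ∑' k, P a k * u k)
  simpa only [mul_assoc, tsum_mul_left] using hrow.hasSum

theorem isHarmonic_of_le_tsum (hP0 : ∀ i j, 0 ≤ P i j) (hπ0 : ∀ i, 0 ≤ π i)
    (hπpos : ∀ i, 0 < π i) (hπP : ∀ j, HasSum (fun i => π i * P i j) (π j)) {u : E → ℝ}
    (hu0 : 0 ≤ u) (hπu : Summable fun k => π k * u k)
    (hPu : ∀ i, Summable fun k => P i k * u k) (hsub : ∀ i, u i ≤ ∑' k, P i k * u k) :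
    IsHarmonic P u := by
  have hdefect : HasSum (fun a => π a * (∑' k, P a k * u k) - π a * u a) 0 := by
    simpa using (hasSum_invariant_mul_tsum hP0 hπ0 hπP hu0 hπu).sub hπu.hasSum
  have hzero := (hasSum_zero_iff_of_nonneg fun a =>
    sub_nonneg.2 (mul_le_mul_of_nonneg_left (hsub a) (hπ0 a))).1 hdefect
  intro i
  have hi : π i * (∑' k, P i k * u k) = π i * u i := sub_eq_zero.1 (congrFun hzero i)
  rw [← mul_left_cancel₀ (hπpos i).ne' hi]
  exact (hPu i).hasSum

theorem IsHarmonic.sub_const (hP1 : ∀ i, HasSum (P i) 1) {f : E → ℝ} (hf : IsHarmonic P f)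
    (c : ℝ) : IsHarmonic P fun k => f k - c := fun i => by
  simpa only [mul_sub, one_mul] using (hf i).sub ((hP1 i).mul_right c)

theorem IsHarmonic.neg {f : E → ℝ} (hf : IsHarmonic P f) : IsHarmonic P (-f) := fun i => by
  simpa using (hf i).neg

theorem IsHarmonic.summable_mul_posPart (hP0 : ∀ i j, 0 ≤ P i j) {f : E → ℝ}
    (hf : IsHarmonic P f) (i : E) : Summable fun k => P i k * f⁺ k :=
  (hf i).summable.abs.of_nonneg_of_le
    (fun k => mul_nonneg (hP0 i k) (posPart_nonneg _))
    (fun k => by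
      rw [abs_mul, abs_of_nonneg (hP0 i k)]
      exact mul_le_mul_of_nonneg_left (max_le (le_abs_self _) (abs_nonneg _)) (hP0 i k))

theorem IsHarmonic.posPart_le_tsum (hP0 : ∀ i j, 0 ≤ P i j) {f : E → ℝ} (hf : IsHarmonic P f)
    (i : E) : f⁺ i ≤ ∑' k, P i k * f⁺ k := by
  have hsumm := hf.summable_mul_posPart hP0 i
  refine sup_le ?_ (tsum_nonneg fun k => mul_nonneg (hP0 i k) (posPart_nonneg _))
  exact hasSum_le (fun k => mul_le_mul_of_nonneg_left (le_posPart _) (hP0 i k)) (hf i)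
    hsumm.hasSum

theorem IsHarmonic.posPart (hP0 : ∀ i j, 0 ≤ P i j) (hπ0 : ∀ i, 0 ≤ π i)
    (hπpos : ∀ i, 0 < π i) (hπP : ∀ j, HasSum (fun i => π i * P i j) (π j)) {f : E → ℝ}
    (hf : IsHarmonic P f) (hπf : Summable fun k => π k * |f k|) : IsHarmonic P f⁺ :=
  isHarmonic_of_le_tsum hP0 hπ0 hπpos hπP (fun _ => posPart_nonneg _)
    (hπf.of_nonneg_of_le (fun k => mul_nonneg (hπ0 k) (posPart_nonneg _))
      fun k => mul_le_mul_of_nonneg_left (max_le (le_abs_self _) (abs_nonneg _)) (hπ0 k))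
    (hf.summable_mul_posPart hP0) (hf.posPart_le_tsum hP0)

theorem IsHarmonic.eq_zero_of_transition_pos (hP0 : ∀ i j, 0 ≤ P i j) {u : E → ℝ}
    (hu : IsHarmonic P u) (hu0 : 0 ≤ u) {a b : E} (ha : u a = 0) (hab : 0 < P a b) :
    u b = 0 := by
  have h := (hasSum_zero_iff_of_nonneg fun k => mul_nonneg (hP0 a k) (hu0 k)).1 (ha ▸ hu a)
  exact (mul_eq_zero.1 (congrFun h b)).resolve_left hab.ne'

theorem IsHarmonic.nonpos_of_transition_pos (hP0 : ∀ i j, 0 ≤ P i j) {f : E → ℝ}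
    (hf : IsHarmonic P f⁺) {a b : E} (ha : f a ≤ 0) (hab : 0 < P a b) : f b ≤ 0 :=
  posPart_eq_zero.1 <|
    hf.eq_zero_of_transition_pos hP0 (fun _ => posPart_nonneg _) (posPart_eq_zero.2 ha) hab

theorem IsHarmonic.eq_zero_of_transition_pos_of_summable (hP0 : ∀ i j, 0 ≤ P i j)
    (hπ0 : ∀ i, 0 ≤ π i) (hπpos : ∀ i, 0 < π i) (hπP : ∀ j, HasSum (fun i => π i * P i j) (π j))
    {f : E → ℝ} (hf : IsHarmonic P f) (hπf : Summable fun k => π k * |f k|) {a b : E}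
    (ha : f a = 0) (hab : 0 < P a b) : f b = 0 := by
  have hup := hf.posPart hP0 hπ0 hπpos hπP hπf
  have hdown := hf.neg.posPart hP0 hπ0 hπpos hπP (by simpa using hπf)
  refine le_antisymm (hup.nonpos_of_transition_pos hP0 ha.le hab) (neg_nonpos.1 ?_)
  exact hdown.nonpos_of_transition_pos hP0 (by simp [ha]) hab

end TransitionMatrix

theorem stmt4_general {E : Type*}
    (P : E → E → ℝ) (hP0 : ∀ i j, 0 ≤ P i j) (hP1 : ∀ i, HasSum (P i) 1)
    (hirr : ∀ i j, ∃ n, 1 ≤ n ∧ ∃ x : ℕ → E, x 0 = i ∧ x n = j ∧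
      ∀ k < n, 0 < P (x k) (x (k + 1)))
    (π : E → ℝ) (hπ0 : ∀ i, 0 ≤ π i) (hπ1 : ∑' i, π i = 1)
    (hπP : ∀ j, HasSum (fun i => π i * P i j) (π j))
    (h : E → ℝ)
    (hharm : ∀ i, HasSum (fun k => P i k * h k) (h i))
    (hsum : Summable fun i => π i * |h i|) :
    ∀ i j, h i = h j := by
  have hπsumm : Summable π := by
    by_contra hπsumm
    simp [tsum_eq_zero_of_not_summable hπsumm] at hπ1
  have hπpos := TransitionMatrix.IsIrreducible.pos_of_invariant hirr hP0 hπ0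
    (by rintro rfl; simp at hπ1) hπP
  intro i j
  have hf := TransitionMatrix.IsHarmonic.sub_const (f := h) hP1 hharm (h j)
  have hπf := summable_mul_abs_sub_const hπ0 hπsumm hsum (h j)
  have hzero : ∀ k, h k - h j = 0 :=
    TransitionMatrix.IsIrreducible.forall_of_forall_transition hirr
      (fun _ _ ha hab => hf.eq_zero_of_transition_pos_of_summable hP0 hπ0 hπpos hπP hπf ha hab)
      (sub_self (h j))
  exact sub_eq_zero.1 (hzero i)

theorem stmt4 {E : Type*} [Countable E]
    (P : E → E → ℝ) (hP0 : ∀ i j, 0 ≤ P i j) (hP1 : ∀ i, HasSum (P i) 1)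
    (hirr : ∀ i j, ∃ n, 1 ≤ n ∧ ∃ x : ℕ → E, x 0 = i ∧ x n = j ∧
      ∀ k < n, 0 < P (x k) (x (k + 1)))
    (π : E → ℝ) (hπ0 : ∀ i, 0 ≤ π i) (hπ1 : ∑' i, π i = 1)
    (hπP : ∀ j, HasSum (fun i => π i * P i j) (π j))
    (h : E → ℝ)
    (hharm : ∀ i, HasSum (fun k => P i k * h k) (h i))
    (hsum : Summable fun i => π i * |h i|) :
    ∀ i j, h i = h j :=
  stmt4_general P hP0 hP1 hirr π hπ0 hπ1 hπP h hharm hsum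
end

section
/- Let E be a countable type, let P be an irreducible transition matrix on E, and let π be an invariant probability vector of P. Suppose X₁ and X₂ are two solutions of Poisson's equation in matrix form for P and π such that, for every j ∈ E, the family (π(i)·(|X₁(i,j)| + |X₂(i,j)|))_{i∈E} is summable. Then there exists β : E → ℝ such that X₁(i,j) = X₂(i,j) + β(j) for all i, j ∈ E. -/
/-! For fixed `j`, `h = X₁(·, j) - X₂(·, j)` is `P`-harmonic and `π`-integrable, and so is
`h - c` for the constant `c = h j`. Then `w = |h - c|` is subharmonic, while invariance of `π`
(Fubini for nonnegative series) gives `∑ π (P w - w) = 0`; since irreducibility forces `π > 0`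
everywhere, `w` is harmonic. A nonnegative harmonic function vanishing at a state vanishes at all
its successors, so `w` vanishes along paths from `j`, i.e. everywhere. -/

def IsIrreducibleMatrix {E : Type*} (P : E → E → ℝ) : Prop :=
  ∀ i j, ∃ n, 1 ≤ n ∧ ∃ x : ℕ → E, x 0 = i ∧ x n = j ∧ ∀ k < n, 0 < P (x k) (x (k + 1))

section

variable {E : Type*} {P : E → E → ℝ} {π : E → ℝ}

theorem IsIrreducibleMatrix.forall_of_step (hirr : IsIrreducibleMatrix P) {S : E → Prop}
    {i₀ : E} (h₀ : S i₀) (hstep : ∀ a b, S a → 0 < P a b → S b) (i : E) : S i := by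
  obtain ⟨n, -, x, rfl, rfl, hx⟩ := hirr i₀ i
  induction n with
  | zero => exact h₀
  | succ n ih => exact hstep _ _ (ih fun k hk => hx k (by omega)) (hx n n.lt_succ_self)

theorem IsIrreducibleMatrix.invariant_pos (hirr : IsIrreducibleMatrix P)
    (hP0 : ∀ i j, 0 ≤ P i j) (hπ0 : ∀ i, 0 ≤ π i) (hπ1 : ∑' i, π i = 1)
    (hπP : ∀ j, HasSum (fun i => π i * P i j) (π j)) (i : E) : 0 < π i := by
  obtain ⟨i₀, hi₀⟩ : ∃ i₀, π i₀ ≠ 0 := by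
    by_contra! h
    simp [h] at hπ1
  refine hirr.forall_of_step (S := fun i => 0 < π i) ((hπ0 i₀).lt_of_ne' hi₀)
    (fun a b ha hab => ?_) i
  calc 0 < π a * P a b := mul_pos ha hab
    _ ≤ π b := le_hasSum (hπP b) a fun k _ => mul_nonneg (hπ0 k) (hP0 k b)

theorem hasSum_mul_tsum_of_invariant (hP0 : ∀ i j, 0 ≤ P i j) (hπ0 : ∀ i, 0 ≤ π i)
    (hπP : ∀ j, HasSum (fun i => π i * P i j) (π j)) {f : E → ℝ} (hf0 : ∀ k, 0 ≤ f k)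
    (hPf : ∀ i, Summable fun k => P i k * f k) (hπf : Summable fun k => π k * f k) :
    HasSum (fun i => π i * ∑' k, P i k * f k) (∑' k, π k * f k) := by
  set g : E × E → ℝ := fun p => π p.2 * P p.2 p.1 * f p.1
  have hcol : ∀ k, HasSum (fun i => g (k, i)) (π k * f k) := fun k => (hπP k).mul_right (f k)
  have hg : Summable g :=
    (summable_prod_of_nonneg fun p => mul_nonneg (mul_nonneg (hπ0 _) (hP0 _ _)) (hf0 _)).mpr
      ⟨fun k => (hcol k).summable, hπf.congr fun k => ((hcol k).tsum_eq).symm⟩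
  have hsum : HasSum g (∑' k, π k * f k) := by
    rw [(hg.hasSum.prod_fiberwise hcol).tsum_eq]
    exact hg.hasSum
  refine ((Equiv.prodComm E E).hasSum_iff.mpr hsum).prod_fiberwise fun i => ?_
  show HasSum (fun k => π i * P i k * f k) _
  simpa only [mul_assoc] using (hPf i).hasSum.mul_left (π i)

theorem tsum_mul_eq_self_of_subharmonic (hP0 : ∀ i j, 0 ≤ P i j) (hπ0 : ∀ i, 0 ≤ π i)
    (hπP : ∀ j, HasSum (fun i => π i * P i j) (π j)) {f : E → ℝ} (hf0 : ∀ k, 0 ≤ f k)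
    (hPf : ∀ i, Summable fun k => P i k * f k) (hπf : Summable fun k => π k * f k)
    (hsub : ∀ i, f i ≤ ∑' k, P i k * f k) {i : E} (hπi : 0 < π i) :
    ∑' k, P i k * f k = f i := by
  have hdefect : HasSum (fun i => π i * (∑' k, P i k * f k - f i)) 0 := by
    simpa only [mul_sub, sub_self] using
      (hasSum_mul_tsum_of_invariant hP0 hπ0 hπP hf0 hPf hπf).sub hπf.hasSum
  have hzero := congrFun ((hasSum_zero_iff_of_nonneg fun i =>
    mul_nonneg (hπ0 i) (sub_nonneg.2 (hsub i))).mp hdefect) i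
  exact sub_eq_zero.mp ((mul_eq_zero.mp hzero).resolve_left hπi.ne')

theorem eq_zero_of_tsum_mul_eq_zero {a f : E → ℝ} (ha : ∀ k, 0 ≤ a k) (hf : ∀ k, 0 ≤ f k)
    (hs : Summable fun k => a k * f k) (h : ∑' k, a k * f k = 0) {k : E} (hk : 0 < a k) :
    f k = 0 := by
  have hzero := congrFun ((hasSum_zero_iff_of_nonneg fun k => mul_nonneg (ha k) (hf k)).mp
    (h ▸ hs.hasSum)) k
  exact (mul_eq_zero.mp hzero).resolve_left hk.ne'

theorem abs_le_tsum_mul_abs {a h : E → ℝ} (ha : ∀ k, 0 ≤ a k) (hs : Summable fun k => a k * h k) :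
    |∑' k, a k * h k| ≤ ∑' k, a k * |h k| := by
  have habs : ∀ k, ‖a k * h k‖ = a k * |h k| := fun k => by
    rw [Real.norm_eq_abs, abs_mul, abs_of_nonneg (ha k)]
  simpa only [Real.norm_eq_abs, habs] using norm_tsum_le_tsum_norm hs.norm

theorem sub_eq_tsum_mul_sub_of_sub_tsum_eq {u v g : E → ℝ}
    (hu : ∀ i, Summable fun k => P i k * u k) (hv : ∀ i, Summable fun k => P i k * v k)
    (hu' : ∀ i, u i - ∑' k, P i k * u k = g i) (hv' : ∀ i, v i - ∑' k, P i k * v k = g i)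
    (i : E) : u i - v i = ∑' k, P i k * (u k - v k) := by
  simp_rw [mul_sub]
  rw [(hu i).tsum_sub (hv i)]
  linarith [hu' i, hv' i]

theorem IsIrreducibleMatrix.harmonic_eq (hirr : IsIrreducibleMatrix P) (hP0 : ∀ i j, 0 ≤ P i j)
    (hP1 : ∀ i, HasSum (P i) 1) (hπpos : ∀ i, 0 < π i) (hπs : Summable π)
    (hπP : ∀ j, HasSum (fun i => π i * P i j) (π j)) {h : E → ℝ}
    (hPh : ∀ i, Summable fun k => P i k * h k) (hh : ∀ i, h i = ∑' k, P i k * h k)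
    (hπh : Summable fun i => π i * |h i|) (i i₀ : E) : h i = h i₀ := by
  have hπ0 : ∀ i, 0 ≤ π i := fun i => (hπpos i).le
  set c := h i₀
  have hPhc : ∀ i, Summable fun k => P i k * (h k - c) := fun i => by
    simpa only [mul_sub] using (hPh i).sub ((hP1 i).summable.mul_right c)
  have hhc : ∀ i, h i - c = ∑' k, P i k * (h k - c) := fun i => by
    simp_rw [mul_sub]
    rw [(hPh i).tsum_sub ((hP1 i).summable.mul_right c), tsum_mul_right, (hP1 i).tsum_eq,
      one_mul, ← hh i]
  set w : E → ℝ := fun k => |h k - c|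
  have hPw : ∀ i, Summable fun k => P i k * w k := fun i =>
    (hPhc i).abs.congr fun k => by rw [abs_mul, abs_of_nonneg (hP0 i k)]
  have hπw : Summable fun k => π k * w k := by
    refine (hπh.add (hπs.mul_right |c|)).of_nonneg_of_le
      (fun k => mul_nonneg (hπ0 k) (abs_nonneg _)) fun k => ?_
    rw [← mul_add]
    exact mul_le_mul_of_nonneg_left (abs_sub _ _) (hπ0 k)
  have hw : ∀ i, ∑' k, P i k * w k = w i := fun i =>
    tsum_mul_eq_self_of_subharmonic hP0 hπ0 hπP (fun k => abs_nonneg _) hPw hπw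
      (fun i => (hhc i).symm ▸ abs_le_tsum_mul_abs (hP0 i) (hPhc i)) (hπpos i)
  have hwi : w i = 0 :=
    hirr.forall_of_step (S := fun a => w a = 0) (i₀ := i₀) (abs_eq_zero.mpr (sub_self c))
      (fun a b ha hab => eq_zero_of_tsum_mul_eq_zero (hP0 a) (fun k => abs_nonneg _) (hPw a)
        ((hw a).trans ha) hab) i
  exact sub_eq_zero.mp (abs_eq_zero.mp hwi)

end

theorem stmt5_general {E : Type*} [DecidableEq E]
    (P : E → E → ℝ) (hP0 : ∀ i j, 0 ≤ P i j) (hP1 : ∀ i, HasSum (P i) 1)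
    (hirr : ∀ i j, ∃ n, 1 ≤ n ∧ ∃ x : ℕ → E, x 0 = i ∧ x n = j ∧
      ∀ k < n, 0 < P (x k) (x (k + 1)))
    (π : E → ℝ) (hπ0 : ∀ i, 0 ≤ π i) (hπ1 : ∑' i, π i = 1)
    (hπP : ∀ j, HasSum (fun i => π i * P i j) (π j))
    (X₁ X₂ : E → E → ℝ)
    (hX₁sum : ∀ i j, Summable fun k => P i k * X₁ k j)
    (hX₁ : ∀ i j, X₁ i j - ∑' k, P i k * X₁ k j = (if i = j then (1 : ℝ) else 0) - π j)
    (hX₂sum : ∀ i j, Summable fun k => P i k * X₂ k j)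
    (hX₂ : ∀ i j, X₂ i j - ∑' k, P i k * X₂ k j = (if i = j then (1 : ℝ) else 0) - π j)
    (hπX : ∀ j, Summable fun i => π i * (|X₁ i j| + |X₂ i j|)) :
    ∃ β : E → ℝ, ∀ i j, X₁ i j = X₂ i j + β j := by
  have hirr : IsIrreducibleMatrix P := hirr
  have hπs : Summable π := by
    by_contra h
    simp [tsum_eq_zero_of_not_summable h] at hπ1
  have hπpos := hirr.invariant_pos hP0 hπ0 hπ1 hπP
  refine ⟨fun j => X₁ j j - X₂ j j, fun i j => ?_⟩
  have hdiff : X₁ i j - X₂ i j = X₁ j j - X₂ j j := by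
    refine hirr.harmonic_eq hP0 hP1 hπpos hπs hπP (h := fun k => X₁ k j - X₂ k j)
      (fun i => by simpa only [mul_sub] using (hX₁sum i j).sub (hX₂sum i j))
      (sub_eq_tsum_mul_sub_of_sub_tsum_eq (fun i => hX₁sum i j) (fun i => hX₂sum i j)
        (fun i => hX₁ i j) (fun i => hX₂ i j)) ?_ i j
    exact (hπX j).of_nonneg_of_le (fun k => mul_nonneg (hπ0 k) (abs_nonneg _))
      fun k => mul_le_mul_of_nonneg_left (abs_sub _ _) (hπ0 k)
  linarith

theorem stmt5 {E : Type*} [Countable E] [DecidableEq E]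
    (P : E → E → ℝ) (hP0 : ∀ i j, 0 ≤ P i j) (hP1 : ∀ i, HasSum (P i) 1)
    (hirr : ∀ i j, ∃ n, 1 ≤ n ∧ ∃ x : ℕ → E, x 0 = i ∧ x n = j ∧
      ∀ k < n, 0 < P (x k) (x (k + 1)))
    (π : E → ℝ) (hπ0 : ∀ i, 0 ≤ π i) (hπ1 : ∑' i, π i = 1)
    (hπP : ∀ j, HasSum (fun i => π i * P i j) (π j))
    (X₁ X₂ : E → E → ℝ)
    (hX₁sum : ∀ i j, Summable fun k => P i k * X₁ k j)
    (hX₁ : ∀ i j, X₁ i j - ∑' k, P i k * X₁ k j = (if i = j then (1 : ℝ) else 0) - π j)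
    (hX₂sum : ∀ i j, Summable fun k => P i k * X₂ k j)
    (hX₂ : ∀ i j, X₂ i j - ∑' k, P i k * X₂ k j = (if i = j then (1 : ℝ) else 0) - π j)
    (hπX : ∀ j, Summable fun i => π i * (|X₁ i j| + |X₂ i j|)) :
    ∃ β : E → ℝ, ∀ i j, X₁ i j = X₂ i j + β j :=
  stmt5_general P hP0 hP1 hirr π hπ0 hπ1 hπP X₁ X₂ hX₁sum hX₁ hX₂sum hX₂ hπX
end

section
/- Let E be a finite nonempty type, let P be an irreducible stochastic matrix on E, and let A ⊆ E be a nonempty subset with complement B. Then the series ∑_{k=0}^∞ (P_{BB})^k converges in the space of B×B real matrices, the matrix I − P_{BB} is invertible, the sum of the series equals (I − P_{BB})^{-1}, and every entry of (I − P_{BB})^{-1} is nonnegative. -/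
/-!
The block `Q = P_BB` is substochastic, so the row sums `Q ^ n *ᵥ 1` decrease with `n`.
Irreducibility lets every state of `B` reach `A`, so every row sum eventually drops below `1`,
hence for a single `N` all of them do, i.e. `‖Q ^ N‖ < 1` in the `linfty` operator norm. This
makes `∑ Q ^ k` converge, and a convergent geometric series sums to `(1 - Q)⁻¹`; its entries are
nonnegative as limits of nonnegative ones.
-/

open Matrix BigOperators

/-- The submatrix of `P` with rows indexed by `S` and columns indexed by `T`. -/
def subBlock {E : Type*} (P : Matrix E E ℝ) (S T : Set E) : Matrix ↥S ↥T ℝ :=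
  Matrix.of fun i j => P i j

theorem summable_pow_of_norm_pow_lt_one {R : Type*} [NormedRing R] [CompleteSpace R] {x : R}
    {N : ℕ} (hN : 0 < N) (h : ‖x ^ N‖ < 1) : Summable (x ^ ·) := by
  have : NeZero N := ⟨hN.ne'⟩
  rw [← (Nat.divModEquiv N).symm.summable_iff]
  refine Summable.of_norm_bounded ((summable_geometric_of_lt_one (norm_nonneg _) h).mul_of_nonneg
    (g := fun r : Fin N => ‖x ^ (r : ℕ)‖) .of_finite (fun _ => by positivity)
    (fun _ => norm_nonneg _)) ?_
  rintro ⟨m, r⟩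
  rw [Function.comp_apply, Nat.divModEquiv_symm_apply, pow_add, mul_comm m, pow_mul]
  rcases m.eq_zero_or_pos with rfl | hm
  · simp
  · exact (norm_mul_le _ _).trans (by gcongr; exact norm_pow_le' _ hm)

namespace Matrix

theorem hasSum_pow_inv_one_sub {ι R : Type*} [Fintype ι] [DecidableEq ι] [CommRing R]
    [TopologicalSpace R] [IsTopologicalRing R] [T2Space R] {Q : Matrix ι ι R}
    (h : Summable (Q ^ ·)) : HasSum (Q ^ ·) (1 - Q)⁻¹ ∧ IsUnit (1 - Q) := by
  have hinv : (1 - Q)⁻¹ = ∑' k, Q ^ k := inv_eq_right_inv h.one_sub_mul_tsum_pow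
  exact ⟨hinv ▸ h.hasSum, ⟨⟨1 - Q, _, h.one_sub_mul_tsum_pow, h.tsum_pow_mul_one_sub⟩, rfl⟩⟩

section linftyOpNorm

attribute [local instance] Matrix.linftyOpNormedAddCommGroup Matrix.linftyOpNormedRing

variable {ι : Type*} [Fintype ι]

theorem linfty_opNorm_lt_one {m : Type*} [Fintype m] {M : Matrix m ι ℝ}
    (h : ∀ i, ∑ j, |M i j| < 1) : ‖M‖ < 1 := by
  rw [linfty_opNorm_def, NNReal.coe_lt_one, Finset.sup_lt_iff zero_lt_one]
  intro i _
  rw [← NNReal.coe_lt_one, NNReal.coe_sum]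
  simpa using h i

theorem mulVec_le_mulVec_of_nonneg {m α : Type*} [Semiring α] [PartialOrder α] [IsOrderedRing α]
    {M : Matrix m ι α} (hM : ∀ i j, 0 ≤ M i j) {v w : ι → α} (hvw : v ≤ w) : M *ᵥ v ≤ M *ᵥ w :=
  fun i => Finset.sum_le_sum fun j _ => mul_le_mul_of_nonneg_left (hvw j) (hM i j)

variable [DecidableEq ι] {Q : Matrix ι ι ℝ}

theorem antitone_pow_mulVec_one (hQ0 : ∀ i j, 0 ≤ Q i j) (hQ1 : Q *ᵥ 1 ≤ 1) :
    Antitone fun n => Q ^ n *ᵥ 1 :=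
  antitone_nat_of_succ_le fun n => by
    rw [pow_succ, ← mulVec_mulVec]
    exact mulVec_le_mulVec_of_nonneg (pow_apply_nonneg hQ0 n) hQ1

theorem summable_pow_of_pow_mulVec_one_lt (hQ0 : ∀ i j, 0 ≤ Q i j) (hQ1 : Q *ᵥ 1 ≤ 1)
    (hleak : ∀ i, ∃ n, (Q ^ n *ᵥ 1) i < 1) : Summable (Q ^ ·) := by
  choose n hn using hleak
  set N := Finset.univ.sup n + 1
  have hN : ‖Q ^ N‖ < 1 := linfty_opNorm_lt_one fun i => by
    have hle : n i ≤ N := (Finset.le_sup (Finset.mem_univ i)).trans (Nat.le_succ _)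
    simpa [abs_of_nonneg (pow_apply_nonneg hQ0 _ _ _), mulVec, dotProduct] using
      (antitone_pow_mulVec_one hQ0 hQ1 hle i).trans_lt (hn i)
  -- the `linfty` norm induces the product uniformity, which is complete
  exact @summable_pow_of_norm_pow_lt_one _ _ (inferInstanceAs (CompleteSpace (ι → ι → ℝ))) _ _
    (Nat.succ_pos _) hN

end linftyOpNorm

end Matrix

section subBlock

theorem sum_subtype_le_sum {E : Type*} [Fintype E] {S : Set E} [Fintype S] {f : E → ℝ}
    (hf : ∀ x, 0 ≤ f x) : ∑ x : S, f x ≤ ∑ x, f x := by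
  rw [Finset.sum_set_coe]
  exact Finset.sum_le_univ_sum_of_nonneg hf

theorem sum_subtype_lt_sum {E : Type*} [Fintype E] {S : Set E} [Fintype S] {f : E → ℝ}
    (hf : ∀ x, 0 ≤ f x) {a : E} (ha : a ∉ S) (hfa : 0 < f a) : ∑ x : S, f x < ∑ x, f x := by
  rw [Finset.sum_set_coe]
  exact Finset.sum_lt_sum_of_subset (Finset.subset_univ _) (Finset.mem_univ a) (by simpa) hfa
    fun x _ _ => hf x

variable {E : Type*} [Fintype E] [DecidableEq E] {P : Matrix E E ℝ} {S : Set E} [Fintype S]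

theorem subBlock_pow_apply_le (hP : ∀ i j, 0 ≤ P i j) (n : ℕ) (i j : S) :
    (subBlock P S S ^ n) i j ≤ (P ^ n) i j := by
  induction n generalizing j with
  | zero => simp [one_apply, Subtype.ext_iff]
  | succ n ih =>
    rw [pow_succ, pow_succ, mul_apply, mul_apply]
    calc ∑ l : S, (subBlock P S S ^ n) i l * P l j ≤ ∑ l : S, (P ^ n) i l * P l j :=
          Finset.sum_le_sum fun l _ => mul_le_mul_of_nonneg_right (ih l) (hP l j)
      _ ≤ ∑ l, (P ^ n) i l * P l j :=
          sum_subtype_le_sum fun l => mul_nonneg (pow_apply_nonneg hP n i l) (hP l j)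

theorem subBlock_pow_mulVec_one_le (hP : ∀ i j, 0 ≤ P i j) (n : ℕ) (i : S) :
    (subBlock P S S ^ n *ᵥ 1) i ≤ ∑ j : S, (P ^ n) i j := by
  simp only [mulVec, dotProduct, Pi.one_apply, mul_one]
  exact Finset.sum_le_sum fun j _ => subBlock_pow_apply_le hP n i j

theorem subBlock_mulVec_one_le (hP : P ∈ rowStochastic ℝ E) : subBlock P S S *ᵥ 1 ≤ 1 :=
  fun i => calc
    (subBlock P S S *ᵥ 1) i ≤ ∑ j : S, (P ^ 1) i j := by
      simpa using subBlock_pow_mulVec_one_le hP.1 1 i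
    _ ≤ ∑ j, P i j := by simpa using sum_subtype_le_sum fun j => hP.1 i j
    _ = 1 := sum_row_of_mem_rowStochastic hP i

theorem subBlock_pow_mulVec_one_lt (hP : P ∈ rowStochastic ℝ E) {a : E} (ha : a ∉ S) {n : ℕ}
    {i : S} (hn : 0 < (P ^ n) i a) : (subBlock P S S ^ n *ᵥ 1) i < 1 := calc
  (subBlock P S S ^ n *ᵥ 1) i ≤ ∑ j : S, (P ^ n) i j := subBlock_pow_mulVec_one_le hP.1 n i
  _ < ∑ j, (P ^ n) i j := sum_subtype_lt_sum (pow_apply_nonneg hP.1 n i) ha hn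
  _ = 1 := sum_row_of_mem_rowStochastic (pow_mem hP n) i

end subBlock

theorem stmt6_general {E : Type*} [Fintype E] [DecidableEq E]
    (P : Matrix E E ℝ)
    (hP0 : ∀ i j, 0 ≤ P i j) (hP1 : ∀ i, ∑ j, P i j = 1)
    (hirr : ∀ i j, ∃ n, 1 ≤ n ∧ 0 < (P ^ n) i j)
    (A : Set E) [DecidablePred (· ∈ A)] (hA : A.Nonempty) :
    HasSum (fun k : ℕ => subBlock P Aᶜ Aᶜ ^ k) (1 - subBlock P Aᶜ Aᶜ)⁻¹ ∧
    IsUnit (1 - subBlock P Aᶜ Aᶜ) ∧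
    ∀ i j, 0 ≤ (1 - subBlock P Aᶜ Aᶜ)⁻¹ i j := by
  have hP : P ∈ rowStochastic ℝ E := mem_rowStochastic_iff_sum.2 ⟨hP0, hP1⟩
  have hQ0 : ∀ i j, 0 ≤ subBlock P Aᶜ Aᶜ i j := fun i j => hP0 i j
  obtain ⟨a, ha⟩ := hA
  have hsum : Summable (subBlock P Aᶜ Aᶜ ^ ·) :=
    summable_pow_of_pow_mulVec_one_lt hQ0 (subBlock_mulVec_one_le hP) fun i => by
      obtain ⟨n, -, hn⟩ := hirr i a
      exact ⟨n, subBlock_pow_mulVec_one_lt hP (Set.notMem_compl_iff.2 ha) hn⟩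
  obtain ⟨hS, hU⟩ := hasSum_pow_inv_one_sub hsum
  exact ⟨hS, hU, fun i j =>
    (Pi.hasSum.1 (Pi.hasSum.1 hS i) j).nonneg fun k => pow_apply_nonneg hQ0 k i j⟩

theorem stmt6 {E : Type*} [Fintype E] [Nonempty E] [DecidableEq E]
    (P : Matrix E E ℝ)
    (hP0 : ∀ i j, 0 ≤ P i j) (hP1 : ∀ i, ∑ j, P i j = 1)
    (hirr : ∀ i j, ∃ n, 1 ≤ n ∧ 0 < (P ^ n) i j)
    (A : Set E) [DecidablePred (· ∈ A)] (hA : A.Nonempty) :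
    HasSum (fun k : ℕ => subBlock P Aᶜ Aᶜ ^ k) (1 - subBlock P Aᶜ Aᶜ)⁻¹ ∧
    IsUnit (1 - subBlock P Aᶜ Aᶜ) ∧
    ∀ i j, 0 ≤ (1 - subBlock P Aᶜ Aᶜ)⁻¹ i j :=
  stmt6_general P hP0 hP1 hirr A hA
end

section
/- Let E be a finite nonempty type, let P be an irreducible stochastic matrix on E, let π be an invariant probability vector of P, and let A ⊆ E be a nonempty subset with complement B. Then I − P_{BB} is invertible, ∑_{j∈A} π(j) > 0, and the row vector π^{(A)} on A defined by π^{(A)}(i) = π(i) / ∑_{j∈A} π(j) is an invariant probability vector of the censored matrix P^{(A)} := P_{AA} + P_{AB} (I − P_{BB})^{-1} P_{BA}: its entries are nonnegative, they sum to 1, and (π^{(A)})^T P^{(A)} = (π^{(A)})^T. -/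
/-!
Writing `B = Aᶜ`, the equation `π P = π` splits into `π_A P_AA + π_B P_BA = π_A` and
`π_A P_AB + π_B P_BB = π_B`; once `I - P_BB` is invertible, substituting
`π_B = π_A P_AB (I - P_BB)⁻¹` into the first equation gives `π_A P^(A) = π_A`, and normalising
is harmless because irreducibility makes `π` strictly positive.

`I - P_BB` is invertible by a maximum principle: if `P_BB v = v`, extend `v` by `0` on `A`. For
a stochastic `P`, the set where `|v|` attains its maximum is closed under the transitions of `P`;
if the maximum were positive this set would avoid `A`, yet by irreducibility it reaches `A`.
-/

open Matrix BigOperators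

theorem vecMul_add_mul_inv_mul_eq_self {m n R : Type*} [Fintype m] [Fintype n] [DecidableEq n]
    [CommRing R] {Paa : Matrix m m R} {Pab : Matrix m n R}
    {Pba : Matrix n m R} {Pbb : Matrix n n R} {x : m → R} {y : n → R}
    (hx : x ᵥ* Paa + y ᵥ* Pba = x) (hy : x ᵥ* Pab + y ᵥ* Pbb = y) (hU : IsUnit (1 - Pbb)) :
    x ᵥ* (Paa + Pab * (1 - Pbb)⁻¹ * Pba) = x := by
  have hxy : x ᵥ* Pab = y ᵥ* (1 - Pbb) := by
    rw [vecMul_sub, vecMul_one]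
    exact eq_sub_of_add_eq hy
  have hinv : (1 - Pbb) * (1 - Pbb)⁻¹ = 1 :=
    mul_nonsing_inv _ ((isUnit_iff_isUnit_det _).mp hU)
  rw [vecMul_add, Matrix.mul_assoc, ← vecMul_vecMul, hxy, vecMul_vecMul, ← Matrix.mul_assoc, hinv,
    Matrix.one_mul, hx]

theorem eq_of_le_sum_mul {ι : Type*} [Fintype ι] {p f : ι → ℝ} {M : ℝ}
    (hp0 : ∀ j, 0 ≤ p j) (hp1 : ∑ j, p j = 1) (hf : ∀ j, f j ≤ M) (hM : M ≤ ∑ j, p j * f j)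
    {j : ι} (hj : 0 < p j) : f j = M := by
  have hsum : ∑ k, p k * (M - f k) = 0 := by
    have : ∑ k, p k * (M - f k) = M - ∑ k, p k * f k := by
      simp only [mul_sub, Finset.sum_sub_distrib, ← Finset.sum_mul, hp1, one_mul]
    have hle : 0 ≤ ∑ k, p k * (M - f k) :=
      Finset.sum_nonneg fun k _ => mul_nonneg (hp0 k) (sub_nonneg.mpr (hf k))
    linarith
  have := (Finset.sum_eq_zero_iff_of_nonneg fun k _ =>
    mul_nonneg (hp0 k) (sub_nonneg.mpr (hf k))).mp hsum j (Finset.mem_univ j)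
  rcases mul_eq_zero.mp this with h | h
  · exact absurd h hj.ne'
  · linarith

section Nonneg

variable {E : Type*} [Fintype E] [DecidableEq E] {P : Matrix E E ℝ}

theorem mem_of_pow_apply_pos (hP0 : ∀ i j, 0 ≤ P i j) {S : Set E}
    (hS : ∀ i ∈ S, ∀ j, 0 < P i j → j ∈ S) (n : ℕ) {i j : E} (hi : i ∈ S)
    (hij : 0 < (P ^ n) i j) : j ∈ S := by
  induction n generalizing j with
  | zero =>
    obtain rfl : i = j := by
      by_contra h
      simp [one_apply_ne h] at hij
    exact hi
  | succ n ih =>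
    rw [pow_succ, mul_apply, Finset.sum_pos_iff_of_nonneg fun k _ =>
      mul_nonneg (pow_apply_nonneg hP0 n i k) (hP0 k j)] at hij
    obtain ⟨k, -, hk⟩ := hij
    exact hS k (ih (pos_of_mul_pos_left hk (hP0 k j))) j
      (pos_of_mul_pos_right hk (pow_apply_nonneg hP0 n i k))

theorem vecMul_pow_eq_self {π : E → ℝ} (hπP : π ᵥ* P = π) (n : ℕ) : π ᵥ* P ^ n = π := by
  induction n with
  | zero => simp
  | succ n ih => rw [pow_succ, ← vecMul_vecMul, ih, hπP]

theorem pos_of_vecMul_eq_self (hP0 : ∀ i j, 0 ≤ P i j) (hirr : ∀ i j, ∃ n, 0 < (P ^ n) i j)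
    {π : E → ℝ} (hπ0 : ∀ i, 0 ≤ π i) (hπ : π ≠ 0) (hπP : π ᵥ* P = π) (j : E) : 0 < π j := by
  obtain ⟨i, hi⟩ := Function.ne_iff.mp hπ
  obtain ⟨n, hn⟩ := hirr i j
  rw [← vecMul_pow_eq_self hπP n]
  exact Finset.sum_pos' (fun k _ => mul_nonneg (hπ0 k) (pow_apply_nonneg hP0 n k j))
    ⟨i, Finset.mem_univ i, mul_pos ((hπ0 i).lt_of_ne' hi) hn⟩

end Nonneg

section Censoring

variable {E : Type*} [Fintype E] {P : Matrix E E ℝ} {A : Set E} [DecidablePred (· ∈ A)]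

theorem vecMul_subBlock_add_vecMul_subBlock_compl (π : E → ℝ) (T : Set E) :
    (fun i : A => π i) ᵥ* subBlock P A T + (fun i : ↥Aᶜ => π i) ᵥ* subBlock P Aᶜ T =
      fun j : T => (π ᵥ* P) j := by
  funext j
  exact Fintype.sum_subtype_add_sum_subtype (· ∈ A) fun i => π i * P i j

variable [DecidableEq E]

theorem eq_zero_of_subBlock_compl_mulVec_eq_self (hP0 : ∀ i j, 0 ≤ P i j)
    (hP1 : ∀ i, ∑ j, P i j = 1) (hreach : ∀ i ∉ A, ∃ n, ∃ a ∈ A, 0 < (P ^ n) i a)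
    {v : ↥Aᶜ → ℝ} (hv : subBlock P Aᶜ Aᶜ *ᵥ v = v) : v = 0 := by
  set w : E → ℝ := fun e => if h : e ∈ Aᶜ then v ⟨e, h⟩ else 0
  have hw : ∀ i : ↥Aᶜ, w i = ∑ j, P i j * w j := by
    intro i
    rw [← Fintype.sum_subtype_add_sum_subtype (· ∈ A)]
    have hcompl : ∀ k : ↥Aᶜ, (k : E) ∉ A := Subtype.prop
    simp only [Set.mem_compl_iff, dite_not, hcompl, ↓reduceDIte, Subtype.coe_eta,
      ← congrFun hv i, mulVec, dotProduct, subBlock, of_apply, Subtype.coe_prop, mul_zero,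
      Finset.sum_const_zero, zero_add, w]
    -- the two sums differ only in the (defeq) `Fintype` instances on `Aᶜ`
    rfl
  by_contra hv0
  obtain ⟨i₁, hi₁⟩ := Function.ne_iff.mp hv0
  obtain ⟨i₀, -, hmax⟩ := Finset.exists_max_image Finset.univ (fun e => |w e|)
    ⟨i₁, Finset.mem_univ _⟩
  set M := |w i₀|
  have hM : 0 < M :=
    (abs_pos.mpr (by simpa [w, show (i₁ : E) ∉ A from i₁.2] using hi₁)).trans_le
      (hmax i₁ (Finset.mem_univ _))
  set S := {e | |w e| = M}
  have hSA : ∀ e ∈ S, e ∉ A := fun e he heA => by simp [S, w, heA, hM.ne] at he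
  have hS : ∀ i ∈ S, ∀ j, 0 < P i j → j ∈ S := by
    intro i hi j hj
    refine eq_of_le_sum_mul (hP0 i) (hP1 i) (fun k => hmax k (Finset.mem_univ k)) ?_ hj
    calc M = |∑ j, P i j * w j| := by rw [← hi, hw ⟨i, hSA i hi⟩]
      _ ≤ ∑ j, |P i j * w j| := Finset.abs_sum_le_sum_abs _ _
      _ = ∑ j, P i j * |w j| := by simp only [abs_mul, abs_of_nonneg (hP0 i _)]
  obtain ⟨n, a, ha, hpos⟩ := hreach i₀ (hSA i₀ rfl)
  exact hSA a (mem_of_pow_apply_pos hP0 hS n rfl hpos) ha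

theorem isUnit_one_sub_subBlock_compl (hP0 : ∀ i j, 0 ≤ P i j)
    (hP1 : ∀ i, ∑ j, P i j = 1) (hreach : ∀ i ∉ A, ∃ n, ∃ a ∈ A, 0 < (P ^ n) i a) :
    IsUnit (1 - subBlock P Aᶜ Aᶜ) := by
  rw [isUnit_iff_isUnit_det, isUnit_iff_ne_zero, Ne, ← exists_mulVec_eq_zero_iff]
  rintro ⟨v, hv0, hv⟩
  rw [sub_mulVec, one_mulVec, sub_eq_zero] at hv
  exact hv0 (eq_zero_of_subBlock_compl_mulVec_eq_self hP0 hP1 hreach hv.symm)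

end Censoring

theorem stmt8_general {E : Type*} [Fintype E] [DecidableEq E]
    (P : Matrix E E ℝ)
    (hP0 : ∀ i j, 0 ≤ P i j) (hP1 : ∀ i, ∑ j, P i j = 1)
    (hirr : ∀ i j, ∃ n, 1 ≤ n ∧ 0 < (P ^ n) i j)
    (π : E → ℝ) (hπ0 : ∀ i, 0 ≤ π i) (hπ1 : ∑ i, π i = 1)
    (hπP : π ᵥ* P = π)
    (A : Set E) [DecidablePred (· ∈ A)] (hA : A.Nonempty) :
    IsUnit (1 - subBlock P Aᶜ Aᶜ) ∧
    0 < ∑ j : ↥A, π j ∧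
    (∀ i : ↥A, 0 ≤ π i / ∑ j : ↥A, π j) ∧
    (∑ i : ↥A, π i / ∑ j : ↥A, π j) = 1 ∧
    (fun i : ↥A => π i / ∑ j : ↥A, π j) ᵥ*
        (subBlock P A A + subBlock P A Aᶜ * (1 - subBlock P Aᶜ Aᶜ)⁻¹ * subBlock P Aᶜ A)
      = fun i : ↥A => π i / ∑ j : ↥A, π j := by
  have hirr' : ∀ i j, ∃ n, 0 < (P ^ n) i j := fun i j => (hirr i j).imp fun _ => And.right
  have hU : IsUnit (1 - subBlock P Aᶜ Aᶜ) :=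
    isUnit_one_sub_subBlock_compl hP0 hP1 fun i _ =>
      (hirr' i hA.some).imp fun _ hn => ⟨_, hA.some_mem, hn⟩
  have hπpos : ∀ j, 0 < π j :=
    pos_of_vecMul_eq_self hP0 hirr' hπ0 (by rintro rfl; simp at hπ1) hπP
  have := hA.to_subtype
  have hc : 0 < ∑ j : ↥A, π j := Finset.sum_pos (fun j _ => hπpos j) Finset.univ_nonempty
  refine ⟨hU, hc, fun i => div_nonneg (hπ0 i) hc.le, by rw [← Finset.sum_div, div_self hc.ne'], ?_⟩
  have hblock := vecMul_subBlock_add_vecMul_subBlock_compl (P := P) (A := A) π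
  rw [hπP] at hblock
  have hinv := vecMul_add_mul_inv_mul_eq_self (hblock A) (hblock Aᶜ) hU
  have hnormalize : (fun i : ↥A => π i / ∑ j : ↥A, π j) = (∑ j : ↥A, π j)⁻¹ • fun i : ↥A => π i :=
    funext fun i => div_eq_inv_mul _ _
  rw [hnormalize, smul_vecMul, hinv]

theorem stmt8 {E : Type*} [Fintype E] [Nonempty E] [DecidableEq E]
    (P : Matrix E E ℝ)
    (hP0 : ∀ i j, 0 ≤ P i j) (hP1 : ∀ i, ∑ j, P i j = 1)
    (hirr : ∀ i j, ∃ n, 1 ≤ n ∧ 0 < (P ^ n) i j)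
    (π : E → ℝ) (hπ0 : ∀ i, 0 ≤ π i) (hπ1 : ∑ i, π i = 1)
    (hπP : π ᵥ* P = π)
    (A : Set E) [DecidablePred (· ∈ A)] (hA : A.Nonempty) :
    IsUnit (1 - subBlock P Aᶜ Aᶜ) ∧
    0 < ∑ j : ↥A, π j ∧
    (∀ i : ↥A, 0 ≤ π i / ∑ j : ↥A, π j) ∧
    (∑ i : ↥A, π i / ∑ j : ↥A, π j) = 1 ∧
    (fun i : ↥A => π i / ∑ j : ↥A, π j) ᵥ*
        (subBlock P A A + subBlock P A Aᶜ * (1 - subBlock P Aᶜ Aᶜ)⁻¹ * subBlock P Aᶜ A)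
      = fun i : ↥A => π i / ∑ j : ↥A, π j :=
  stmt8_general P hP0 hP1 hirr π hπ0 hπ1 hπP A hA
end

section
/- Let E be a finite nonempty type, let P be a stochastic matrix on E, let π be an invariant probability vector of P, and let A ⊆ E be a subset with complement B such that I − P_{BB} is invertible. Then π_B^T = π_A^T P_{AB} (I − P_{BB})^{-1}, where π_A and π_B denote the restrictions of π to A and B. -/
open Matrix BigOperators

/-
Splitting the invariance equation `πᵀ P = πᵀ` along `E = A ⊔ B` and reading off its
`B`-columns gives `π_Bᵀ = π_Aᵀ P_{AB} + π_Bᵀ P_{BB}`, that is `π_Bᵀ (I - P_{BB}) = π_Aᵀ P_{AB}`;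
multiplying on the right by `(I - P_{BB})⁻¹` solves for `π_B`.
-/

theorem Matrix.eq_vecMul_nonsing_inv_of_vecMul_eq {n R : Type*} [Fintype n] [DecidableEq n]
    [CommRing R] {M : Matrix n n R} (hM : IsUnit M) {v w : n → R} (h : v ᵥ* M = w) :
    v = w ᵥ* M⁻¹ := by
  rw [← h, vecMul_vecMul, mul_nonsing_inv _ ((isUnit_iff_isUnit_det M).mp hM), vecMul_one]

theorem vecMul_restrict_eq_add_subBlock {E : Type*} [Fintype E] (P : Matrix E E ℝ) (v : E → ℝ)
    (A T : Set E) [DecidablePred (· ∈ A)] :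
    (fun j : ↥T => (v ᵥ* P) j) =
      (fun i : ↥A => v i) ᵥ* subBlock P A T + (fun i : ↥(Aᶜ) => v i) ᵥ* subBlock P Aᶜ T := by
  funext j
  exact (Fintype.sum_subtype_add_sum_subtype (· ∈ A) fun i => v i * P i j).symm

theorem vecMul_one_sub_subBlock_compl_of_vecMul_eq {E : Type*} [Fintype E] [DecidableEq E]
    {P : Matrix E E ℝ} {π : E → ℝ} (hπP : π ᵥ* P = π) (A : Set E) [DecidablePred (· ∈ A)] :
    (fun j : ↥(Aᶜ) => π j) ᵥ* (1 - subBlock P Aᶜ Aᶜ) =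
      (fun i : ↥A => π i) ᵥ* subBlock P A Aᶜ := by
  have hsplit := vecMul_restrict_eq_add_subBlock P π A Aᶜ
  rw [hπP] at hsplit
  rw [vecMul_sub, vecMul_one, sub_eq_iff_eq_add, ← hsplit]

theorem stmt9_general {E : Type*} [Fintype E] [DecidableEq E]
    (P : Matrix E E ℝ)
    (π : E → ℝ)
    (hπP : π ᵥ* P = π)
    (A : Set E) [DecidablePred (· ∈ A)]
    (hBB : IsUnit (1 - subBlock P Aᶜ Aᶜ)) :
    (fun j : ↥(Aᶜ) => π j) =
      (fun i : ↥A => π i) ᵥ* (subBlock P A Aᶜ * (1 - subBlock P Aᶜ Aᶜ)⁻¹) := by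
  rw [← vecMul_vecMul]
  exact eq_vecMul_nonsing_inv_of_vecMul_eq hBB (vecMul_one_sub_subBlock_compl_of_vecMul_eq hπP A)

theorem stmt9 {E : Type*} [Fintype E] [Nonempty E] [DecidableEq E]
    (P : Matrix E E ℝ)
    (hP0 : ∀ i j, 0 ≤ P i j) (hP1 : ∀ i, ∑ j, P i j = 1)
    (π : E → ℝ) (hπ0 : ∀ i, 0 ≤ π i) (hπ1 : ∑ i, π i = 1)
    (hπP : π ᵥ* P = π)
    (A : Set E) [DecidablePred (· ∈ A)]
    (hBB : IsUnit (1 - subBlock P Aᶜ Aᶜ)) :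
    (fun j : ↥(Aᶜ) => π j) =
      (fun i : ↥A => π i) ᵥ* (subBlock P A Aᶜ * (1 - subBlock P Aᶜ Aᶜ)⁻¹) :=
  stmt9_general P π hπP A hBB
end

section
/- Let E be a finite nonempty type, let P be a stochastic matrix on E, let π be an invariant probability vector of P, and let A ⊆ E be a subset with complement B such that I − P_{BB} is invertible. Then π_A^T (e + P_{AB} (I − P_{BB})^{-1} e) = 1, where π_A denotes the restriction of π to A and e denotes the all-ones column vector of the appropriate dimension. -/
open Matrix BigOperators

/-!
Split the invariance equation `π P = π` at the columns of `B = Aᶜ`: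
`π_A P_AB + π_B P_BB = π_B`, i.e. `π_A P_AB = π_B (I - P_BB)`. Inverting `I - P_BB` gives
`π_A P_AB (I - P_BB)⁻¹ = π_B`, so the left-hand side equals `π_A e + π_B e = ∑ π = 1`.
-/

namespace Matrix

variable {E : Type*} [Fintype E] (A : Set E) [DecidablePred (· ∈ A)]

theorem vecMul_subBlock_add_vecMul_subBlock_compl (P : Matrix E E ℝ) (π : E → ℝ) (T : Set E) :
    (fun i : ↥A => π i) ᵥ* subBlock P A T + (fun i : ↥Aᶜ => π i) ᵥ* subBlock P Aᶜ T =
      fun j : ↥T => (π ᵥ* P) j := by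
  funext j
  simp only [Pi.add_apply, vecMul, dotProduct, subBlock, of_apply]
  exact Fintype.sum_subtype_add_sum_subtype (· ∈ A) fun i => π i * P i j

theorem dotProduct_one_add_dotProduct_one_compl (π : E → ℝ) :
    (fun i : ↥A => π i) ⬝ᵥ (fun _ => 1) + (fun i : ↥Aᶜ => π i) ⬝ᵥ (fun _ => 1) = ∑ i, π i := by
  simp only [dotProduct, mul_one]
  exact Fintype.sum_subtype_add_sum_subtype (· ∈ A) π

variable [DecidableEq E]

theorem vecMul_subBlock_eq_vecMul_one_sub_subBlock {P : Matrix E E ℝ} {π : E → ℝ}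
    (hπP : π ᵥ* P = π) :
    (fun i : ↥A => π i) ᵥ* subBlock P A Aᶜ =
      (fun i : ↥Aᶜ => π i) ᵥ* (1 - subBlock P Aᶜ Aᶜ) := by
  have hsplit := vecMul_subBlock_add_vecMul_subBlock_compl A P π Aᶜ
  rw [hπP] at hsplit
  rw [vecMul_sub, vecMul_one, eq_sub_iff_add_eq]
  exact hsplit

theorem vecMul_subBlock_mul_inv_eq {P : Matrix E E ℝ} {π : E → ℝ} (hπP : π ᵥ* P = π)
    (hBB : IsUnit (1 - subBlock P Aᶜ Aᶜ)) :
    (fun i : ↥A => π i) ᵥ* (subBlock P A Aᶜ * (1 - subBlock P Aᶜ Aᶜ)⁻¹) =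
      fun i : ↥Aᶜ => π i := by
  rw [← vecMul_vecMul, vecMul_subBlock_eq_vecMul_one_sub_subBlock A hπP, vecMul_vecMul,
    mul_nonsing_inv _ ((isUnit_iff_isUnit_det _).mp hBB), vecMul_one]

end Matrix

theorem stmt10_general {E : Type*} [Fintype E] [DecidableEq E]
    (P : Matrix E E ℝ)
    (π : E → ℝ) (hπ1 : ∑ i, π i = 1)
    (hπP : π ᵥ* P = π)
    (A : Set E) [DecidablePred (· ∈ A)]
    (hBB : IsUnit (1 - subBlock P Aᶜ Aᶜ)) :
    (fun i : ↥A => π i) ⬝ᵥ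
      ((fun _ : ↥A => (1 : ℝ)) +
        (subBlock P A Aᶜ * (1 - subBlock P Aᶜ Aᶜ)⁻¹) *ᵥ (fun _ : ↥(Aᶜ) => (1 : ℝ))) = 1 := by
  rw [dotProduct_add, dotProduct_mulVec, vecMul_subBlock_mul_inv_eq A hπP hBB,
    dotProduct_one_add_dotProduct_one_compl, hπ1]

theorem stmt10 {E : Type*} [Fintype E] [Nonempty E] [DecidableEq E]
    (P : Matrix E E ℝ)
    (hP0 : ∀ i j, 0 ≤ P i j) (hP1 : ∀ i, ∑ j, P i j = 1)
    (π : E → ℝ) (hπ0 : ∀ i, 0 ≤ π i) (hπ1 : ∑ i, π i = 1)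
    (hπP : π ᵥ* P = π)
    (A : Set E) [DecidablePred (· ∈ A)]
    (hBB : IsUnit (1 - subBlock P Aᶜ Aᶜ)) :
    (fun i : ↥A => π i) ⬝ᵥ
      ((fun _ : ↥A => (1 : ℝ)) +
        (subBlock P A Aᶜ * (1 - subBlock P Aᶜ Aᶜ)⁻¹) *ᵥ (fun _ : ↥(Aᶜ) => (1 : ℝ))) = 1 :=
  stmt10_general P π hπ1 hπP A hBB
end

section
/- Let E be a finite nonempty type, let P be a stochastic matrix on E, let π be an invariant probability vector of P, and let A ⊆ E be a subset with complement B such that I − P_{BB} is invertible; write Ĥ := (I − P_{BB})^{-1} and P^{(A)} := P_{AA} + P_{AB} Ĥ P_{BA}. Let X be an E×E real matrix whose row block X_A indexed by A satisfies (I − P^{(A)}) X_A = [I, P_{AB} Ĥ] − (e + P_{AB} Ĥ e) π^T and whose row block X_B indexed by B satisfies X_B = Ĥ P_{BA} X_A + [O, Ĥ] − Ĥ e π^T. Then X satisfies Poisson's equation (I − P) X = I − e π^T. -/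
open Matrix BigOperators

/-- The row block of an `E × E` matrix `X` with rows indexed by `S`. -/
def rowBlock {E : Type*} (X : Matrix E E ℝ) (S : Set E) : Matrix ↥S E ℝ :=
  Matrix.of fun i j => X i j

/-- The `ι × E` matrix whose columns indexed by `A` form `M` and whose columns indexed
by the complement of `A` form `N`. -/
def blockRow {E ι : Type*} (A : Set E) [DecidablePred (· ∈ A)]
    (M : Matrix ι ↥A ℝ) (N : Matrix ι ↥(Aᶜ) ℝ) : Matrix ι E ℝ :=
  Matrix.of fun i j => if h : j ∈ A then M i ⟨j, h⟩ else N i ⟨j, h⟩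

/-!
Split `(I - P) X` into its rows indexed by `A` and by `B = Aᶜ`. On the `B` rows, multiplying the
equation for `X_B` by `I - P_BB` gives `(I - P_BB) X_B - P_BA X_A = [O, I] - e πᵀ`. On the `A` rows,
substituting `X_B` gives `(I - P^(A)) X_A - P_AB [O, Ĥ] + P_AB Ĥ e πᵀ`, which the equation for `X_A`
turns into `[I, O] - e πᵀ`.
-/

section RowBlocks

variable {E : Type*}

lemma rowBlock_sub (X Y : Matrix E E ℝ) (S : Set E) :
    rowBlock (X - Y) S = rowBlock X S - rowBlock Y S := rfl

lemma rowBlock_vecMulVec (v w : E → ℝ) (S : Set E) :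
    rowBlock (vecMulVec v w) S = vecMulVec (fun i : ↥S => v i) w := rfl

lemma eq_of_rowBlock_eq (A : Set E) {X Y : Matrix E E ℝ}
    (hA : rowBlock X A = rowBlock Y A) (hB : rowBlock X Aᶜ = rowBlock Y Aᶜ) : X = Y := by
  ext i j
  by_cases h : i ∈ A
  · exact congrFun (congrFun hA ⟨i, h⟩) j
  · exact congrFun (congrFun hB ⟨i, h⟩) j

lemma rowBlock_mul [Fintype E] (A : Set E) [DecidablePred (· ∈ A)] (P X : Matrix E E ℝ)
    (S : Set E) :
    rowBlock (P * X) S = subBlock P S A * rowBlock X A + subBlock P S Aᶜ * rowBlock X Aᶜ := by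
  ext i j
  exact (Fintype.sum_subtype_add_sum_subtype (· ∈ A) fun k => P i k * X k j).symm

variable (A : Set E) [DecidablePred (· ∈ A)]

lemma mul_blockRow {ι κ : Type*} [Fintype ι] (Q : Matrix κ ι ℝ) (M : Matrix ι ↥A ℝ)
    (N : Matrix ι ↥Aᶜ ℝ) :
    Q * blockRow A M N = blockRow A (Q * M) (Q * N) := by
  ext i j
  by_cases h : j ∈ A <;> simp [blockRow, mul_apply, h]

lemma blockRow_sub {ι : Type*} (M M' : Matrix ι ↥A ℝ) (N N' : Matrix ι ↥Aᶜ ℝ) :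
    blockRow A M N - blockRow A M' N' = blockRow A (M - M') (N - N') := by
  ext i j
  by_cases h : j ∈ A <;> simp [blockRow, h]

variable [DecidableEq E]

lemma rowBlock_one : rowBlock (1 : Matrix E E ℝ) A = blockRow A 1 0 := by
  ext i j
  by_cases h : j ∈ A
  · simp [rowBlock, blockRow, h, one_apply, Subtype.ext_iff]
  · simp [rowBlock, blockRow, h, one_apply, show (i : E) ≠ j from fun hij => h (hij ▸ i.2)]

lemma rowBlock_one_compl : rowBlock (1 : Matrix E E ℝ) Aᶜ = blockRow A 0 1 := by
  ext i j
  by_cases h : j ∈ A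
  · simp [rowBlock, blockRow, h, one_apply, show (i : E) ≠ j from fun hij => i.2 (hij ▸ h)]
  · simp [rowBlock, blockRow, h, one_apply, Subtype.ext_iff]

end RowBlocks
section Poisson

variable {E : Type*} [Fintype E] [DecidableEq E] (A : Set E) [DecidablePred (· ∈ A)] (π : E → ℝ)
  {PAA : Matrix ↥A ↥A ℝ} {PAB : Matrix ↥A ↥Aᶜ ℝ} {PBA : Matrix ↥Aᶜ ↥A ℝ}
  {PBB H : Matrix ↥Aᶜ ↥Aᶜ ℝ} {XA : Matrix ↥A E ℝ} {XB : Matrix ↥Aᶜ E ℝ}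

lemma poisson_rows_compl (hH : (1 - PBB) * H = 1)
    (hXB : XB = H * PBA * XA + blockRow A 0 H - vecMulVec (H *ᵥ fun _ => 1) π) :
    XB - (PBA * XA + PBB * XB) = blockRow A 0 1 - vecMulVec (fun _ => 1) π := by
  calc XB - (PBA * XA + PBB * XB) = (1 - PBB) * XB - PBA * XA := by
        rw [Matrix.sub_mul, Matrix.one_mul]; abel
    _ = blockRow A 0 1 - vecMulVec (fun _ => 1) π := by
        rw [hXB, Matrix.mul_sub, Matrix.mul_add, mul_blockRow, mul_vecMulVec, mulVec_mulVec,
          Matrix.mul_assoc, ← Matrix.mul_assoc (1 - PBB), hH, Matrix.one_mul, Matrix.mul_zero,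
          one_mulVec]
        abel

lemma poisson_rows
    (hXA : (1 - (PAA + PAB * H * PBA)) * XA
      = blockRow A 1 (PAB * H) - vecMulVec ((fun _ => 1) + (PAB * H) *ᵥ fun _ => 1) π)
    (hXB : XB = H * PBA * XA + blockRow A 0 H - vecMulVec (H *ᵥ fun _ => 1) π) :
    XA - (PAA * XA + PAB * XB) = blockRow A 1 0 - vecMulVec (fun _ => 1) π := by
  have hPXB : PAB * XB = PAB * H * PBA * XA + blockRow A 0 (PAB * H)
      - vecMulVec ((PAB * H) *ᵥ fun _ => 1) π := by
    rw [hXB, Matrix.mul_sub, Matrix.mul_add, mul_blockRow, mul_vecMulVec, Matrix.mul_zero,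
      mulVec_mulVec, Matrix.mul_assoc, Matrix.mul_assoc, Matrix.mul_assoc]
  have hblock : blockRow A 1 (PAB * H) - blockRow A 0 (PAB * H) = blockRow A 1 0 := by
    rw [blockRow_sub, sub_zero, sub_self]
  calc XA - (PAA * XA + PAB * XB)
      = (1 - (PAA + PAB * H * PBA)) * XA - blockRow A 0 (PAB * H)
          + vecMulVec ((PAB * H) *ᵥ fun _ => 1) π := by
        rw [hPXB]; simp only [Matrix.sub_mul, Matrix.add_mul, Matrix.one_mul]; abel
    _ = blockRow A 1 0 - vecMulVec (fun _ => 1) π := by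
        rw [hXA, add_vecMulVec, ← hblock]; abel

end Poisson

theorem stmt12_general {E : Type*} [Fintype E] [DecidableEq E]
    (P : Matrix E E ℝ)
    (π : E → ℝ)
    (A : Set E) [DecidablePred (· ∈ A)]
    (hBB : IsUnit (1 - subBlock P Aᶜ Aᶜ))
    (X : Matrix E E ℝ)
    (hXA : (1 - (subBlock P A A +
          subBlock P A Aᶜ * (1 - subBlock P Aᶜ Aᶜ)⁻¹ * subBlock P Aᶜ A)) * rowBlock X A
        = blockRow A (1 : Matrix ↥A ↥A ℝ) (subBlock P A Aᶜ * (1 - subBlock P Aᶜ Aᶜ)⁻¹)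
          - Matrix.vecMulVec
              ((fun _ : ↥A => (1 : ℝ)) +
                (subBlock P A Aᶜ * (1 - subBlock P Aᶜ Aᶜ)⁻¹) *ᵥ (fun _ : ↥(Aᶜ) => (1 : ℝ)))
              π)
    (hXB : rowBlock X Aᶜ
        = (1 - subBlock P Aᶜ Aᶜ)⁻¹ * subBlock P Aᶜ A * rowBlock X A
          + blockRow A (0 : Matrix ↥(Aᶜ) ↥A ℝ) ((1 - subBlock P Aᶜ Aᶜ)⁻¹)
          - Matrix.vecMulVec ((1 - subBlock P Aᶜ Aᶜ)⁻¹ *ᵥ (fun _ : ↥(Aᶜ) => (1 : ℝ))) π) :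
    (1 - P) * X = 1 - Matrix.vecMulVec (fun _ => (1 : ℝ)) π := by
  have hH : (1 - subBlock P Aᶜ Aᶜ) * (1 - subBlock P Aᶜ Aᶜ)⁻¹ = 1 :=
    mul_nonsing_inv _ ((isUnit_iff_isUnit_det _).mp hBB)
  rw [sub_mul, one_mul]
  refine eq_of_rowBlock_eq A ?_ ?_
  · rw [rowBlock_sub, rowBlock_mul A, rowBlock_sub, rowBlock_one, rowBlock_vecMulVec]
    exact poisson_rows A π hXA hXB
  · rw [rowBlock_sub, rowBlock_mul A, rowBlock_sub, rowBlock_one_compl, rowBlock_vecMulVec]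
    exact poisson_rows_compl A π hH hXB

theorem stmt12 {E : Type*} [Fintype E] [Nonempty E] [DecidableEq E]
    (P : Matrix E E ℝ)
    (hP0 : ∀ i j, 0 ≤ P i j) (hP1 : ∀ i, ∑ j, P i j = 1)
    (π : E → ℝ) (hπ0 : ∀ i, 0 ≤ π i) (hπ1 : ∑ i, π i = 1)
    (hπP : π ᵥ* P = π)
    (A : Set E) [DecidablePred (· ∈ A)]
    (hBB : IsUnit (1 - subBlock P Aᶜ Aᶜ))
    (X : Matrix E E ℝ)
    (hXA : (1 - (subBlock P A A +
          subBlock P A Aᶜ * (1 - subBlock P Aᶜ Aᶜ)⁻¹ * subBlock P Aᶜ A)) * rowBlock X A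
        = blockRow A (1 : Matrix ↥A ↥A ℝ) (subBlock P A Aᶜ * (1 - subBlock P Aᶜ Aᶜ)⁻¹)
          - Matrix.vecMulVec
              ((fun _ : ↥A => (1 : ℝ)) +
                (subBlock P A Aᶜ * (1 - subBlock P Aᶜ Aᶜ)⁻¹) *ᵥ (fun _ : ↥(Aᶜ) => (1 : ℝ)))
              π)
    (hXB : rowBlock X Aᶜ
        = (1 - subBlock P Aᶜ Aᶜ)⁻¹ * subBlock P Aᶜ A * rowBlock X A
          + blockRow A (0 : Matrix ↥(Aᶜ) ↥A ℝ) ((1 - subBlock P Aᶜ Aᶜ)⁻¹)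
          - Matrix.vecMulVec ((1 - subBlock P Aᶜ Aᶜ)⁻¹ *ᵥ (fun _ : ↥(Aᶜ) => (1 : ℝ))) π) :
    (1 - P) * X = 1 - Matrix.vecMulVec (fun _ => (1 : ℝ)) π :=
  stmt12_general P π A hBB X hXA hXB
end

section
/- Let E be a finite nonempty type, let P be a stochastic matrix on E, and let π be an invariant probability vector of P. If the series ∑_{n=0}^∞ (P^n − e π^T) converges in the space of E×E real matrices with sum D (the deviation matrix), then (I − P) D = I − e π^T and π^T D = 0. -/
/-!
Since `P e = e`, the terms `f n = P ^ n - e πᵀ` satisfy `f (n + 1) = P f n`, so `P D` is the shifted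
series `D - f 0`, i.e. `(I - P) D = f 0 = I - e πᵀ`. And `πᵀ f n = πᵀ - (πᵀ e) πᵀ = 0` for every `n`,
because `πᵀ P ^ n = πᵀ` and `πᵀ e = 1`.
-/

open Matrix BigOperators

theorem HasSum.one_sub_mul_eq_of_succ {R : Type*} [Ring R] [TopologicalSpace R]
    [IsTopologicalRing R] [T2Space R] {f : ℕ → R} {A D : R} (hD : HasSum f D)
    (hf : ∀ n, f (n + 1) = A * f n) : (1 - A) * D = f 0 := by
  have hshift : HasSum (fun n => f (n + 1)) (A * D) := by
    simpa only [hf] using hD.mul_left A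
  have hD_eq : D = f 0 + A * D := hD.unique hshift.zero_add
  rw [sub_mul, one_mul]
  exact sub_eq_iff_eq_add.mpr hD_eq

theorem HasSum.matrix_vecMul {ι m n R : Type*} [Fintype m] [NonUnitalNonAssocSemiring R]
    [TopologicalSpace R] [ContinuousAdd R] [ContinuousMul R] {f : ι → Matrix m n R}
    {D : Matrix m n R} (v : m → R) (hD : HasSum f D) : HasSum (fun i => v ᵥ* f i) (v ᵥ* D) :=
  hD.map (⟨⟨(v ᵥ* ·), vecMul_zero v⟩, fun A B => vecMul_add A B v⟩ : Matrix m n R →+ (n → R))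
    (Continuous.matrix_vecMul continuous_const continuous_id)

namespace Matrix

variable {l m n R : Type*} [Fintype m] [CommSemiring R]

theorem mul_vecMulVec_one_of_rowSum_eq_one {P : Matrix n m R} (hP : ∀ i, ∑ j, P i j = 1)
    (v : l → R) : P * vecMulVec (fun _ : m => (1 : R)) v = vecMulVec (fun _ : n => 1) v := by
  rw [mul_vecMulVec]
  congr
  ext i
  simp [mulVec, dotProduct, hP]

theorem vecMul_vecMulVec_one_of_sum_eq_one {v : m → R} (hv : ∑ i, v i = 1) :
    v ᵥ* vecMulVec (fun _ => 1) v = v := by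
  simp [vecMul_vecMulVec, dotProduct, hv]

theorem vecMul_pow_of_vecMul_eq_self [DecidableEq m] {P : Matrix m m R} {v : m → R}
    (hv : v ᵥ* P = v) (k : ℕ) : v ᵥ* P ^ k = v := by
  induction k with
  | zero => simp
  | succ k ih => rw [pow_succ, ← vecMul_vecMul, ih, hv]

end Matrix

theorem stmt14_general {E : Type*} [Fintype E] [DecidableEq E]
    (P : Matrix E E ℝ)
    (hP1 : ∀ i, ∑ j, P i j = 1)
    (π : E → ℝ) (hπ1 : ∑ i, π i = 1)
    (hπP : π ᵥ* P = π)
    (D : Matrix E E ℝ)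
    (hD : HasSum (fun n : ℕ => P ^ n - Matrix.vecMulVec (fun _ => (1 : ℝ)) π) D) :
    (1 - P) * D = 1 - Matrix.vecMulVec (fun _ => (1 : ℝ)) π ∧ π ᵥ* D = 0 := by
  set Q : Matrix E E ℝ := vecMulVec (fun _ => 1) π
  have hPQ : P * Q = Q := mul_vecMulVec_one_of_rowSum_eq_one hP1 π
  have hπQ : π ᵥ* Q = π := vecMul_vecMulVec_one_of_sum_eq_one hπ1
  refine ⟨?_, ?_⟩
  · simpa using hD.one_sub_mul_eq_of_succ fun n => by rw [pow_succ', mul_sub, hPQ]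
  · refine (hD.matrix_vecMul π).unique ?_
    simp [vecMul_sub, vecMul_pow_of_vecMul_eq_self hπP, hπQ]

theorem stmt14 {E : Type*} [Fintype E] [Nonempty E] [DecidableEq E]
    (P : Matrix E E ℝ)
    (hP0 : ∀ i j, 0 ≤ P i j) (hP1 : ∀ i, ∑ j, P i j = 1)
    (π : E → ℝ) (hπ0 : ∀ i, 0 ≤ π i) (hπ1 : ∑ i, π i = 1)
    (hπP : π ᵥ* P = π)
    (D : Matrix E E ℝ)
    (hD : HasSum (fun n : ℕ => P ^ n - Matrix.vecMulVec (fun _ => (1 : ℝ)) π) D) :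
    (1 - P) * D = 1 - Matrix.vecMulVec (fun _ => (1 : ℝ)) π ∧ π ᵥ* D = 0 :=
  stmt14_general P hP1 π hπ1 hπP D hD
end

section
/- Let E be a finite nonempty type, let P be an irreducible stochastic matrix on E, and let π be an invariant probability vector of P. Suppose the series ∑_{n=0}^∞ (P^n − e π^T) converges in the space of E×E real matrices with sum D, and let X̃ be any E×E real matrix satisfying (I − P) X̃ = I − e π^T. Then D = (I − e π^T) X̃. -/
/-!
Write `Q = e πᵀ`. Row sums and invariance give `P Q = Q P = Q` and `π e = 1` gives `Q² = Q`,
so every term of the series satisfies `(Pⁿ - Q) Q = 0`, whence `D Q = 0`. Since `Q (1 - P) = 0`,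
the partial sums telescope: `(∑_{n<N} (Pⁿ - Q)) (1 - P) = 1 - P^N`, and `P^N → Q` because the
terms of a convergent series tend to zero; hence `D (1 - P) = 1 - Q`. Therefore
`D = D (1 - Q) = D (1 - P) X̃ = (1 - Q) X̃`.
-/

open Matrix Filter Topology

theorem pow_mul_eq_of_mul_eq {M : Type*} [Monoid M] {a b : M} (h : a * b = b) (n : ℕ) :
    a ^ n * b = b := by
  induction n with
  | zero => rw [pow_zero, one_mul]
  | succ n ih => rw [pow_succ, mul_assoc, h, ih]

section TopologicalRing

variable {R : Type*} [Ring R] [TopologicalSpace R] [IsTopologicalRing R] [T2Space R]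
  {P Q D : R}

theorem mul_eq_zero_of_hasSum_pow_sub (hPQ : P * Q = Q) (hQQ : Q * Q = Q)
    (hD : HasSum (fun n : ℕ => P ^ n - Q) D) : D * Q = 0 := by
  have hterm : ∀ n : ℕ, (P ^ n - Q) * Q = 0 := fun n => by
    rw [sub_mul, pow_mul_eq_of_mul_eq hPQ, hQQ, sub_self]
  have hsum := hD.mul_right Q
  simp only [hterm] at hsum
  exact hsum.unique hasSum_zero

theorem mul_one_sub_eq_of_hasSum_pow_sub (hQP : Q * P = Q)
    (hD : HasSum (fun n : ℕ => P ^ n - Q) D) : D * (1 - P) = 1 - Q := by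
  have htelescope : ∀ N : ℕ, (∑ n ∈ Finset.range N, (P ^ n - Q)) * (1 - P) = 1 - P ^ N := by
    intro N
    have hterm : ∀ n : ℕ, (P ^ n - Q) * (1 - P) = P ^ n - P ^ (n + 1) := fun n => by
      rw [sub_mul, mul_one_sub, mul_one_sub, hQP, sub_self, sub_zero, pow_succ]
    rw [Finset.sum_mul, Finset.sum_congr rfl fun n _ => hterm n, Finset.sum_range_sub', pow_zero]
  have hpow : Tendsto (P ^ ·) atTop (𝓝 Q) := by
    simpa using hD.summable.tendsto_atTop_zero.add_const Q
  refine tendsto_nhds_unique (hD.mul_right (1 - P)).tendsto_sum_nat ?_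
  simpa only [← Finset.sum_mul, htelescope] using hpow.const_sub 1

theorem eq_one_sub_mul_of_hasSum_pow_sub (hPQ : P * Q = Q) (hQP : Q * P = Q) (hQQ : Q * Q = Q)
    (hD : HasSum (fun n : ℕ => P ^ n - Q) D) {X : R} (hX : (1 - P) * X = 1 - Q) :
    D = (1 - Q) * X := by
  calc D = D * (1 - Q) := by rw [mul_one_sub, mul_eq_zero_of_hasSum_pow_sub hPQ hQQ hD, sub_zero]
    _ = D * (1 - P) * X := by rw [mul_assoc, hX]
    _ = (1 - Q) * X := by rw [mul_one_sub_eq_of_hasSum_pow_sub hQP hD]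

end TopologicalRing

theorem stmt15_general {E : Type*} [Fintype E] [DecidableEq E]
    (P : Matrix E E ℝ)
    (hP1 : ∀ i, ∑ j, P i j = 1)
    (π : E → ℝ) (hπ1 : ∑ i, π i = 1)
    (hπP : π ᵥ* P = π)
    (D : Matrix E E ℝ)
    (hD : HasSum (fun n : ℕ => P ^ n - Matrix.vecMulVec (fun _ => (1 : ℝ)) π) D)
    (X : Matrix E E ℝ)
    (hX : (1 - P) * X = 1 - Matrix.vecMulVec (fun _ => (1 : ℝ)) π) :
    D = (1 - Matrix.vecMulVec (fun _ => (1 : ℝ)) π) * X := by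
  have hPe : P *ᵥ (fun _ => 1) = fun _ => 1 := funext fun i => by
    simpa [mulVec, dotProduct] using hP1 i
  have hπe : π ⬝ᵥ (fun _ => 1) = 1 := by simpa [dotProduct] using hπ1
  refine eq_one_sub_mul_of_hasSum_pow_sub ?_ ?_ ?_ hD hX
  · rw [mul_vecMulVec, hPe]
  · rw [vecMulVec_mul, hπP]
  · rw [vecMulVec_mul_vecMulVec, hπe, one_smul]

theorem stmt15 {E : Type*} [Fintype E] [Nonempty E] [DecidableEq E]
    (P : Matrix E E ℝ)
    (hP0 : ∀ i j, 0 ≤ P i j) (hP1 : ∀ i, ∑ j, P i j = 1)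
    (hirr : ∀ i j, ∃ n, 1 ≤ n ∧ 0 < (P ^ n) i j)
    (π : E → ℝ) (hπ0 : ∀ i, 0 ≤ π i) (hπ1 : ∑ i, π i = 1)
    (hπP : π ᵥ* P = π)
    (D : Matrix E E ℝ)
    (hD : HasSum (fun n : ℕ => P ^ n - Matrix.vecMulVec (fun _ => (1 : ℝ)) π) D)
    (X : Matrix E E ℝ)
    (hX : (1 - P) * X = 1 - Matrix.vecMulVec (fun _ => (1 : ℝ)) π) :
    D = (1 - Matrix.vecMulVec (fun _ => (1 : ℝ)) π) * X :=
  stmt15_general P hP1 π hπ1 hπP D hD X hX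
end

section
/- Let E be a finite nonempty type, let Q be a generator matrix on E, let π be an invariant probability vector of Q, and let A ⊆ E be a subset with complement B such that Q_{BB} is invertible; write Ĥ := (−Q_{BB})^{-1} and Q^{(A)} := Q_{AA} + Q_{AB} Ĥ Q_{BA}. Let X be an E×E real matrix whose row block X_A indexed by A satisfies (−Q^{(A)}) X_A = [I, Q_{AB} Ĥ] − (e + Q_{AB} Ĥ e) π^T and whose row block X_B indexed by B satisfies X_B = Ĥ Q_{BA} X_A + [O, Ĥ] − Ĥ e π^T. Then X satisfies the continuous-time Poisson equation −Q X = I − e π^T. -/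
open Matrix BigOperators

section helpers
variable {E ι κ : Type*} [Fintype ι]

lemma sum_split {E : Type*} [Fintype E] (A : Set E) [DecidablePred (· ∈ A)] (f : E → ℝ) :
    ∑ k, f k = (∑ k : ↥A, f k) + ∑ k : ↥(Aᶜ), f k :=
  (Fintype.sum_subtype_add_sum_subtype (· ∈ A) f).symm

lemma mul_blockRow_s17 (A : Set E) [DecidablePred (· ∈ A)]
    (M : Matrix κ ι ℝ) (P : Matrix ι ↥A ℝ) (R : Matrix ι ↥(Aᶜ) ℝ) :
    M * blockRow A P R = blockRow A (M * P) (M * R) := by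
  ext i j
  by_cases h : j ∈ A <;> simp [blockRow, Matrix.mul_apply, h]

lemma mul_vecMulVec (M : Matrix κ ι ℝ) (v : ι → ℝ) (w : E → ℝ) :
    M * Matrix.vecMulVec v w = Matrix.vecMulVec (M *ᵥ v) w := by
  ext i j
  simp [Matrix.mul_apply, Matrix.vecMulVec_apply, Matrix.mulVec, dotProduct,
    Finset.sum_mul, mul_assoc]

set_option linter.unusedSectionVars false in
lemma vecMulVec_add (u v : ι → ℝ) (w : E → ℝ) :
    Matrix.vecMulVec (u + v) w = Matrix.vecMulVec u w + Matrix.vecMulVec v w := by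
  ext i j
  simp [Matrix.vecMulVec_apply, add_mul]

end helpers

theorem stmt17 {E : Type*} [Fintype E] [Nonempty E] [DecidableEq E]
    (Q : Matrix E E ℝ)
    (hQ0 : ∀ i j, i ≠ j → 0 ≤ Q i j) (hQ1 : ∀ i, ∑ j, Q i j = 0)
    (π : E → ℝ) (hπ0 : ∀ i, 0 ≤ π i) (hπ1 : ∑ i, π i = 1)
    (hπQ : π ᵥ* Q = 0)
    (A : Set E) [DecidablePred (· ∈ A)]
    (hBB : IsUnit (subBlock Q Aᶜ Aᶜ))
    (X : Matrix E E ℝ)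
    (hXA : (-(subBlock Q A A +
          subBlock Q A Aᶜ * (-subBlock Q Aᶜ Aᶜ)⁻¹ * subBlock Q Aᶜ A)) * rowBlock X A
        = blockRow A (1 : Matrix ↥A ↥A ℝ) (subBlock Q A Aᶜ * (-subBlock Q Aᶜ Aᶜ)⁻¹)
          - Matrix.vecMulVec
              ((fun _ : ↥A => (1 : ℝ)) +
                (subBlock Q A Aᶜ * (-subBlock Q Aᶜ Aᶜ)⁻¹) *ᵥ (fun _ : ↥(Aᶜ) => (1 : ℝ)))
              π)
    (hXB : rowBlock X Aᶜ
        = (-subBlock Q Aᶜ Aᶜ)⁻¹ * subBlock Q Aᶜ A * rowBlock X A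
          + blockRow A (0 : Matrix ↥(Aᶜ) ↥A ℝ) ((-subBlock Q Aᶜ Aᶜ)⁻¹)
          - Matrix.vecMulVec ((-subBlock Q Aᶜ Aᶜ)⁻¹ *ᵥ (fun _ : ↥(Aᶜ) => (1 : ℝ))) π) :
    (-Q) * X = 1 - Matrix.vecMulVec (fun _ => (1 : ℝ)) π := by
  set QAA := subBlock Q A A with hQAA
  set QAB := subBlock Q A Aᶜ with hQAB
  set QBA := subBlock Q Aᶜ A with hQBA
  set QBB := subBlock Q Aᶜ Aᶜ with hQBB
  set H := (-QBB)⁻¹ with hH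
  set XA := rowBlock X A with hXAdef
  set XB := rowBlock X Aᶜ with hXBdef
  have hdet : IsUnit (-QBB).det := (Matrix.isUnit_iff_isUnit_det _).mp hBB.neg
  have hQBBH : QBB * H = -1 := by
    have h1 : (-QBB) * H = 1 := Matrix.mul_nonsing_inv (-QBB) hdet
    rw [Matrix.neg_mul] at h1
    rw [← neg_neg (QBB * H), h1]
  -- row B equation
  have hrowB : -(QBA * XA + QBB * XB)
      = blockRow A (0 : Matrix ↥(Aᶜ) ↥A ℝ) (1 : Matrix ↥(Aᶜ) ↥(Aᶜ) ℝ)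
        - Matrix.vecMulVec (fun _ : ↥(Aᶜ) => (1 : ℝ)) π := by
    rw [hXB, Matrix.mul_sub, Matrix.mul_add, ← Matrix.mul_assoc, ← Matrix.mul_assoc,
      hQBBH, Matrix.neg_mul, Matrix.one_mul, mul_blockRow_s17, _root_.mul_vecMulVec,
      Matrix.mulVec_mulVec, hQBBH]
    have h2 : blockRow A (QBB * (0 : Matrix ↥(Aᶜ) ↥A ℝ)) (-1 : Matrix ↥(Aᶜ) ↥(Aᶜ) ℝ)
        = -blockRow A (0 : Matrix ↥(Aᶜ) ↥A ℝ) (1 : Matrix ↥(Aᶜ) ↥(Aᶜ) ℝ) := by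
      rw [Matrix.mul_zero]
      ext i j
      by_cases h : j ∈ A <;> simp [blockRow, h]
    have h3 : Matrix.vecMulVec ((-1 : Matrix ↥(Aᶜ) ↥(Aᶜ) ℝ) *ᵥ fun _ => (1:ℝ)) π
        = -Matrix.vecMulVec (fun _ : ↥(Aᶜ) => (1 : ℝ)) π := by
      ext i j
      simp [Matrix.vecMulVec_apply, Matrix.neg_mulVec, Matrix.one_mulVec]
    rw [h2, h3, Matrix.neg_mul]
    abel
  -- row A equation
  have hrowA : -(QAA * XA + QAB * XB)
      = blockRow A (1 : Matrix ↥A ↥A ℝ) (0 : Matrix ↥A ↥(Aᶜ) ℝ)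
        - Matrix.vecMulVec (fun _ : ↥A => (1 : ℝ)) π := by
    have hXA' : -((QAA + QAB * H * QBA) * XA)
        = blockRow A (1 : Matrix ↥A ↥A ℝ) (QAB * H)
          - Matrix.vecMulVec
              ((fun _ : ↥A => (1 : ℝ)) + (QAB * H) *ᵥ (fun _ : ↥(Aᶜ) => (1 : ℝ))) π := by
      rw [← Matrix.neg_mul]; exact hXA
    rw [hXB, Matrix.mul_sub, Matrix.mul_add, ← Matrix.mul_assoc, ← Matrix.mul_assoc,
      mul_blockRow_s17, _root_.mul_vecMulVec, Matrix.mulVec_mulVec]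
    have step : -(QAA * XA + (QAB * H * QBA * XA
          + blockRow A (QAB * (0 : Matrix ↥(Aᶜ) ↥A ℝ)) (QAB * H)
          - Matrix.vecMulVec ((QAB * H) *ᵥ fun _ => (1:ℝ)) π))
        = -((QAA + QAB * H * QBA) * XA)
          - blockRow A (QAB * (0 : Matrix ↥(Aᶜ) ↥A ℝ)) (QAB * H)
          + Matrix.vecMulVec ((QAB * H) *ᵥ fun _ => (1:ℝ)) π := by
      rw [Matrix.add_mul]; abel
    rw [step, hXA', _root_.vecMulVec_add]
    have hz : blockRow A (QAB * (0 : Matrix ↥(Aᶜ) ↥A ℝ)) (QAB * H)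
        = blockRow A (0 : Matrix ↥A ↥A ℝ) (QAB * H) := by rw [Matrix.mul_zero]
    rw [hz]
    have hsplit : blockRow A (1 : Matrix ↥A ↥A ℝ) (QAB * H)
        = blockRow A (1 : Matrix ↥A ↥A ℝ) (0 : Matrix ↥A ↥(Aᶜ) ℝ)
          + blockRow A (0 : Matrix ↥A ↥A ℝ) (QAB * H) := by
      ext i j
      by_cases h : j ∈ A <;> simp [blockRow, h]
    rw [hsplit]
    abel
  -- combine
  ext i j
  by_cases hi : i ∈ A
  · have lhs : ((-Q) * X) i j = (-(QAA * XA + QAB * XB)) ⟨i, hi⟩ j := by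
      simp only [Matrix.mul_apply, Matrix.neg_apply, Matrix.add_apply]
      rw [sum_split A (fun k => -Q i k * X k j)]
      simp only [hQAA, hQAB, hXAdef, hXBdef, subBlock, rowBlock, Matrix.of_apply,
        neg_mul, Finset.sum_neg_distrib, neg_add]
    rw [lhs, hrowA]
    by_cases hj : j ∈ A
    · simp [blockRow, hj, Matrix.one_apply, Matrix.vecMulVec_apply, Subtype.ext_iff]
    · have hne : i ≠ j := fun h => hj (h ▸ hi)
      simp [blockRow, hj, Matrix.one_apply, hne, Matrix.vecMulVec_apply]
  · have hi' : i ∈ Aᶜ := hi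
    have lhs : ((-Q) * X) i j = (-(QBA * XA + QBB * XB)) ⟨i, hi'⟩ j := by
      simp only [Matrix.mul_apply, Matrix.neg_apply, Matrix.add_apply]
      rw [sum_split A (fun k => -Q i k * X k j)]
      simp only [hQBA, hQBB, hXAdef, hXBdef, subBlock, rowBlock, Matrix.of_apply,
        neg_mul, Finset.sum_neg_distrib, neg_add]
    rw [lhs, hrowB]
    by_cases hj : j ∈ A
    · have hne : i ≠ j := fun h => hi (h ▸ hj)
      simp [blockRow, hj, Matrix.one_apply, hne, Matrix.vecMulVec_apply]
    · have hj' : j ∈ Aᶜ := hj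
      simp [blockRow, hj, Matrix.one_apply, Matrix.vecMulVec_apply, Subtype.ext_iff]
end
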